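/- arXiv:2307.14704 — 8 statements merged into one kernel-verified Lean document; each statement's English description precedes it below -/
import Mathlib

section
/- Let P = {(A_i, B_i)}_{1≤i≤m} be a Bollobás system of pairs of finite subsets of [n] (i.e., A_i ∩ B_i = ∅ for all i, and A_i ∩ B_j ≠ ∅ for all i ≠ j). Then ∑_{i=1}^m 1/C(|A_i|+|B_i|, |A_i|) ≤ 1. -/
open Finset Equiv

noncomputable def splitPerm {k : ℕ} (S : Finset (Fin k)) : Equiv.Perm (Fin k) :=
  (finCongr (show k = S.card + Sᶜ.card by
      rw [Finset.card_add_card_compl, Fintype.card_fin])).trans <|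
  finSumFinEquiv.symm.trans <|
  (Equiv.sumCongr S.equivFin.symm Sᶜ.equivFin.symm).trans <|
  (Equiv.sumCongr (Equiv.refl _)
    (Equiv.subtypeEquivRight (fun x => Finset.mem_compl))).trans <|
  Equiv.sumCompl (· ∈ S)

lemma splitPerm_mem_iff {k : ℕ} (S : Finset (Fin k)) (i : Fin k) :
    splitPerm S i ∈ S ↔ (i : ℕ) < S.card := by
  unfold splitPerm
  simp only [trans_apply, finCongr_apply]
  by_cases hi : (i : ℕ) < S.card
  · have h1 : (Fin.cast (show k = S.card + Sᶜ.card by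
        rw [Finset.card_add_card_compl, Fintype.card_fin]) i)
        = Fin.castAdd Sᶜ.card ⟨i, hi⟩ := by ext; simp
    rw [h1, finSumFinEquiv_symm_apply_castAdd]
    simpa using hi
  · have hik : (i : ℕ) - S.card < Sᶜ.card := by
      have := i.isLt
      have hk : k = S.card + Sᶜ.card := by
        rw [Finset.card_add_card_compl, Fintype.card_fin]
      omega
    have h1 : (Fin.cast (show k = S.card + Sᶜ.card by
        rw [Finset.card_add_card_compl, Fintype.card_fin]) i)
        = Fin.natAdd S.card ⟨(i : ℕ) - S.card, hik⟩ := by ext; simp; omega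
    rw [h1, finSumFinEquiv_symm_apply_natAdd]
    simp only [sumCongr_apply, Sum.map_inr, sumCompl_apply_inr]
    have hmem : ((Sᶜ).equivFin.symm ⟨(i : ℕ) - S.card, hik⟩ : Fin k) ∉ S :=
      Finset.mem_compl.mp ((Sᶜ).equivFin.symm ⟨(i : ℕ) - S.card, hik⟩).2
    simp only [subtypeEquivRight_apply]
    exact iff_of_false hmem hi

noncomputable def bigP {n k : ℕ} (Q : Finset (Fin n)) (hQ : Q.card = k)
    (S : Finset (Fin k)) : Equiv.Perm (Fin n) :=
  Equiv.Perm.ofSubtype (p := (· ∈ Q))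
    ((Q.orderIsoOfFin hQ).toEquiv.symm.trans ((splitPerm S).trans (Q.orderIsoOfFin hQ).toEquiv))

lemma bigP_congr {n k : ℕ} {Q₁ Q₂ : Finset (Fin n)} {h₁ : Q₁.card = k} {h₂ : Q₂.card = k}
    {S₁ S₂ : Finset (Fin k)} (hQ : Q₁ = Q₂) (hS : S₁ = S₂) :
    bigP Q₁ h₁ S₁ = bigP Q₂ h₂ S₂ := by subst hQ; subst hS; rfl

lemma bigP_inv_apply_mem {n k : ℕ} (Q : Finset (Fin n)) (hQ : Q.card = k)
    (S : Finset (Fin k)) {x : Fin n} (hx : x ∈ Q) :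
    (bigP Q hQ S)⁻¹ x =
      ((Q.orderIsoOfFin hQ ((splitPerm S).symm ((Q.orderIsoOfFin hQ).symm ⟨x, hx⟩))) : Fin n) := by
  unfold bigP
  rw [← map_inv, Equiv.Perm.ofSubtype_apply_of_mem _ hx]
  rfl

lemma bigP_inv_mem {n k : ℕ} (Q : Finset (Fin n)) (hQ : Q.card = k)
    (S : Finset (Fin k)) {x : Fin n} (hx : x ∈ Q) :
    (bigP Q hQ S)⁻¹ x ∈ Q := by
  rw [bigP_inv_apply_mem Q hQ S hx]
  exact ((Q.orderIsoOfFin hQ) _).2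

noncomputable def sIdx {n k : ℕ} (A' Q : Finset (Fin n)) (hQ : Q.card = k) : Finset (Fin k) :=
  Finset.univ.filter fun i => ((Q.orderIsoOfFin hQ i : Fin n) ∈ A')

lemma sIdx_card {n k : ℕ} {A' Q : Finset (Fin n)} (hQ : Q.card = k) (hsub : A' ⊆ Q) :
    (sIdx A' Q hQ).card = A'.card := by
  apply Finset.card_bij (fun i _ => ((Q.orderIsoOfFin hQ i : Fin n)))
  · intro i hi; exact (Finset.mem_filter.mp hi).2
  · intro i hi j hj h
    exact (Q.orderIsoOfFin hQ).injective (Subtype.coe_injective h)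
  · intro y hy
    have hyQ : y ∈ Q := hsub hy
    refine ⟨(Q.orderIsoOfFin hQ).symm ⟨y, hyQ⟩, ?_, ?_⟩
    · have hc : ((Q.orderIsoOfFin hQ) ((Q.orderIsoOfFin hQ).symm ⟨y, hyQ⟩) : Fin n) = y := by
        rw [OrderIso.apply_symm_apply]
      simp only [sIdx, Finset.mem_filter, Finset.mem_univ, true_and]
      rw [hc]; exact hy
    · have hc : ((Q.orderIsoOfFin hQ) ((Q.orderIsoOfFin hQ).symm ⟨y, hyQ⟩) : Fin n) = y := by
        rw [OrderIso.apply_symm_apply]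
      exact hc

lemma sIdx_symm_mem_iff {n k : ℕ} {A' Q : Finset (Fin n)} (hQ : Q.card = k)
    {x : Fin n} (hx : x ∈ Q) :
    (Q.orderIsoOfFin hQ).symm ⟨x, hx⟩ ∈ sIdx A' Q hQ ↔ x ∈ A' := by
  have hc : ((Q.orderIsoOfFin hQ) ((Q.orderIsoOfFin hQ).symm ⟨x, hx⟩) : Fin n) = x := by
    rw [OrderIso.apply_symm_apply]
  simp only [sIdx, Finset.mem_filter, Finset.mem_univ, true_and]
  rw [hc]

lemma count_aux {n : ℕ} (A B : Finset (Fin n)) (hAB : Disjoint A B) :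
    n.factorial ≤ ((A.card + B.card).choose A.card) *
      ((Finset.univ : Finset (Equiv.Perm (Fin n))).filter
        (fun π => ∀ x ∈ A, ∀ y ∈ B, π x < π y)).card := by
  classical
  set k := A.card + B.card with hk
  have hU : (A ∪ B).card = k := Finset.card_union_of_disjoint hAB
  have hQ : ∀ π : Equiv.Perm (Fin n), ((A ∪ B).image ⇑π).card = k := fun π =>
    (Finset.card_image_of_injective _ π.injective).trans hU
  set E := (Finset.univ : Finset (Equiv.Perm (Fin n))).filter
    (fun π => ∀ x ∈ A, ∀ y ∈ B, π x < π y) with hE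
  set T := E ×ˢ (Finset.univ.powersetCard A.card : Finset (Finset (Fin k))) with hT
  -- basic membership facts
  have hAsub : ∀ π : Equiv.Perm (Fin n), A.image ⇑π ⊆ (A ∪ B).image ⇑π := fun π =>
    Finset.image_subset_image Finset.subset_union_left
  have hScard : ∀ π : Equiv.Perm (Fin n),
      (sIdx (A.image ⇑π) ((A ∪ B).image ⇑π) (hQ π)).card = A.card := fun π => by
    rw [sIdx_card (hQ π) (hAsub π), Finset.card_image_of_injective _ π.injective]
  have hmemQ : ∀ (π : Equiv.Perm (Fin n)) {x : Fin n}, x ∈ A ∪ B → π x ∈ (A ∪ B).image ⇑π :=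
    fun π x hx => Finset.mem_image_of_mem _ hx
  have hnotA : ∀ (π : Equiv.Perm (Fin n)) {y : Fin n}, y ∈ B → π y ∉ A.image ⇑π := by
    intro π y hy hmem
    obtain ⟨x, hx, hxy⟩ := Finset.mem_image.mp hmem
    have : x = y := π.injective hxy
    subst this
    exact Finset.disjoint_left.mp hAB hx hy
  -- the map
  set F : Equiv.Perm (Fin n) → Equiv.Perm (Fin n) × Finset (Fin k) :=
    fun π => ((bigP ((A ∪ B).image ⇑π) (hQ π) (sIdx (A.image ⇑π) ((A ∪ B).image ⇑π) (hQ π)))⁻¹ * π,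
      sIdx (A.image ⇑π) ((A ∪ B).image ⇑π) (hQ π)) with hF
  -- the first component formula and membership in E
  have hfirst : ∀ (π : Equiv.Perm (Fin n)) {x : Fin n} (hx : x ∈ A ∪ B),
      (F π).1 x = (((A ∪ B).image ⇑π).orderIsoOfFin (hQ π)
        ((splitPerm (sIdx (A.image ⇑π) ((A ∪ B).image ⇑π) (hQ π))).symm
          ((((A ∪ B).image ⇑π).orderIsoOfFin (hQ π)).symm ⟨π x, hmemQ π hx⟩)) : Fin n) := by
    intro π x hx
    show (bigP _ _ _)⁻¹ (π x) = _
    exact bigP_inv_apply_mem _ _ _ (hmemQ π hx)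
  have hmemE : ∀ π : Equiv.Perm (Fin n), (F π).1 ∈ E := by
    intro π
    rw [hE, Finset.mem_filter]
    refine ⟨Finset.mem_univ _, ?_⟩
    intro x hx y hy
    have hxU : x ∈ A ∪ B := Finset.mem_union_left _ hx
    have hyU : y ∈ A ∪ B := Finset.mem_union_right _ hy
    rw [hfirst π hxU, hfirst π hyU]
    set q := ((A ∪ B).image ⇑π).orderIsoOfFin (hQ π)
    set S := sIdx (A.image ⇑π) ((A ∪ B).image ⇑π) (hQ π)
    set i := (splitPerm S).symm (q.symm ⟨π x, hmemQ π hxU⟩) with hi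
    set j := (splitPerm S).symm (q.symm ⟨π y, hmemQ π hyU⟩) with hj
    have hiS : splitPerm S i ∈ S := by
      rw [hi, Equiv.apply_symm_apply]
      exact (sIdx_symm_mem_iff (hQ π) (hmemQ π hxU)).mpr (Finset.mem_image_of_mem _ hx)
    have hjS : splitPerm S j ∉ S := by
      rw [hj, Equiv.apply_symm_apply]
      rw [sIdx_symm_mem_iff (hQ π) (hmemQ π hyU)]
      exact hnotA π hy
    have hilt : (i : ℕ) < S.card := (splitPerm_mem_iff S i).mp hiS
    have hjge : ¬ (j : ℕ) < S.card := fun h => hjS ((splitPerm_mem_iff S j).mpr h)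
    have hij : i < j := by
      rw [Fin.lt_def]; omega
    exact Subtype.coe_lt_coe.mpr ((q.lt_iff_lt).mpr hij)
  -- maps into T
  have hmapsto : ∀ π ∈ (Finset.univ : Finset (Equiv.Perm (Fin n))), F π ∈ T := by
    intro π _
    rw [hT, Finset.mem_product]
    exact ⟨hmemE π, Finset.mem_powersetCard_univ.mpr (hScard π)⟩
  -- image of A ∪ B under first component
  have himg : ∀ π : Equiv.Perm (Fin n), (A ∪ B).image ⇑(F π).1 = (A ∪ B).image ⇑π := by
    intro π
    apply Finset.eq_of_subset_of_card_le
    · intro z hz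
      obtain ⟨x, hx, hxz⟩ := Finset.mem_image.mp hz
      subst hxz
      show (bigP _ _ _)⁻¹ (π x) ∈ _
      exact bigP_inv_mem _ _ _ (hmemQ π hx)
    · rw [Finset.card_image_of_injective _ (F π).1.injective,
        Finset.card_image_of_injective _ π.injective]
  -- injectivity
  have hinj : Set.InjOn F (Finset.univ : Finset (Equiv.Perm (Fin n))) := by
    intro π₁ _ π₂ _ heq
    have h1 : (F π₁).1 = (F π₂).1 := congrArg Prod.fst heq
    have h2 : (F π₁).2 = (F π₂).2 := congrArg Prod.snd heq
    have hQeq : (A ∪ B).image ⇑π₁ = (A ∪ B).image ⇑π₂ := by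
      rw [← himg π₁, ← himg π₂, h1]
    have ht : bigP ((A ∪ B).image ⇑π₁) (hQ π₁) (sIdx (A.image ⇑π₁) ((A ∪ B).image ⇑π₁) (hQ π₁))
        = bigP ((A ∪ B).image ⇑π₂) (hQ π₂) (sIdx (A.image ⇑π₂) ((A ∪ B).image ⇑π₂) (hQ π₂)) :=
      bigP_congr hQeq h2
    calc π₁ = (bigP _ (hQ π₁) _) * (F π₁).1 := (mul_inv_cancel_left _ _).symm
      _ = (bigP _ (hQ π₂) _) * (F π₂).1 := by rw [h1, ht]
      _ = π₂ := mul_inv_cancel_left _ _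
  -- count
  have hle : (Finset.univ : Finset (Equiv.Perm (Fin n))).card ≤ T.card :=
    Finset.card_le_card_of_injOn F hmapsto hinj
  have hTcard : T.card = E.card * k.choose A.card := by
    rw [hT, Finset.card_product, Finset.card_powersetCard, Finset.card_univ, Fintype.card_fin]
  have hn : (Finset.univ : Finset (Equiv.Perm (Fin n))).card = n.factorial := by
    rw [Finset.card_univ, Fintype.card_perm, Fintype.card_fin]
  rw [← hn]
  calc (Finset.univ : Finset (Equiv.Perm (Fin n))).card ≤ T.card := hle
    _ = k.choose A.card * E.card := by rw [hTcard, mul_comm]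

theorem bollobas_system_inequality (n m : ℕ) (A B : Fin m → Finset (Fin n))
    (hdisj : ∀ i, Disjoint (A i) (B i))
    (hcross : ∀ i j, i ≠ j → (A i ∩ B j).Nonempty) :
    ∑ i, (1 : ℚ) / (((A i).card + (B i).card).choose (A i).card) ≤ 1 := by
  classical
  set E : Fin m → Finset (Equiv.Perm (Fin n)) := fun i =>
    Finset.univ.filter (fun π => ∀ x ∈ A i, ∀ y ∈ B i, π x < π y) with hEdef
  have hdisjE : ∀ i ∈ (Finset.univ : Finset (Fin m)), ∀ j ∈ (Finset.univ : Finset (Fin m)),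
      i ≠ j → Disjoint (E i) (E j) := by
    intro i _ j _ hij
    refine Finset.disjoint_left.mpr ?_
    intro π hi hj
    obtain ⟨x, hx⟩ := hcross i j hij
    obtain ⟨y, hy⟩ := hcross j i (Ne.symm hij)
    have h1 := (Finset.mem_filter.mp hi).2 x (Finset.mem_inter.mp hx).1 y (Finset.mem_inter.mp hy).2
    have h2 := (Finset.mem_filter.mp hj).2 y (Finset.mem_inter.mp hy).1 x (Finset.mem_inter.mp hx).2
    exact absurd (h1.trans h2) (lt_irrefl _)
  have hsum : ∑ i, (E i).card ≤ n.factorial := by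
    rw [← Finset.card_biUnion hdisjE]
    calc (Finset.univ.biUnion E).card
        ≤ (Finset.univ : Finset (Equiv.Perm (Fin n))).card := Finset.card_le_card (Finset.subset_univ _)
      _ = n.factorial := by rw [Finset.card_univ, Fintype.card_perm, Fintype.card_fin]
  have hfact : (0 : ℚ) < n.factorial := by exact_mod_cast n.factorial_pos
  have key : ∀ i : Fin m, (1 : ℚ) / (((A i).card + (B i).card).choose (A i).card)
      ≤ (E i).card / n.factorial := by
    intro i
    have hc := count_aux (A i) (B i) (hdisj i)
    have hcpos : (0 : ℚ) < ((((A i).card + (B i).card).choose (A i).card) : ℚ) := by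
      exact_mod_cast Nat.choose_pos (Nat.le_add_right _ _)
    rw [div_le_div_iff₀ hcpos hfact, one_mul]
    calc (n.factorial : ℚ) ≤ ((((A i).card + (B i).card).choose (A i).card) * (E i).card : ℕ) := by
          exact_mod_cast hc
      _ = (E i).card * (((A i).card + (B i).card).choose (A i).card) := by push_cast; ring
  calc ∑ i, (1 : ℚ) / (((A i).card + (B i).card).choose (A i).card)
      ≤ ∑ i, ((E i).card : ℚ) / n.factorial := Finset.sum_le_sum (fun i _ => key i)
    _ = (∑ i, ((E i).card : ℚ)) / n.factorial := by rw [Finset.sum_div]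
    _ ≤ 1 := by
        rw [div_le_one hfact]
        exact_mod_cast hsum
end

section
/- Let a, b be positive integers with a + b ≤ n, and let {(A_i, B_i)}_{1≤i≤m} be a Bollobás system with |A_i| = a and |B_i| = b for all i. Then m ≤ C(a+b, a). -/
open Finset Function

namespace BollobasAux

variable {n a b : ℕ}

private lemma embCongr {α : Type*} [LinearOrder α] {k : ℕ} {s t : Finset α} (hst : s = t)
    (hs : s.card = k) (ht : t.card = k) (i : Fin k) :
    s.orderEmbOfFin hs i = t.orderEmbOfFin ht i := by subst hst; rfl

section

variable (A B : Finset (Fin n)) (hA : A.card = a) (hB : B.card = b) (hd : Disjoint A B)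
  (σ : Equiv.Perm (Fin n))

include hA in
private lemma cardTA : (A.image ⇑σ).card = a := by
  rw [card_image_of_injective _ σ.injective, hA]

include hB in
private lemma cardTB : (B.image ⇑σ).card = b := by
  rw [card_image_of_injective _ σ.injective, hB]

include hd in
private lemma disjT : Disjoint (A.image ⇑σ) (B.image ⇑σ) :=
  (disjoint_image σ.injective).2 hd

include hA hB hd in
private lemma cardT : (A.image ⇑σ ∪ B.image ⇑σ).card = a + b := by
  rw [card_union_of_disjoint (disjT A B hd σ), cardTA A hA σ, cardTB B hB σ]

/-- The rearranged permutation. -/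
private def bolf : Fin n → Fin n := fun x =>
  if hx : x ∈ A then
    (A.image ⇑σ ∪ B.image ⇑σ).orderEmbOfFin (cardT A B hA hB hd σ)
      (Fin.castAdd b (((A.image ⇑σ).orderIsoOfFin (cardTA A hA σ)).symm
        ⟨σ x, mem_image_of_mem _ hx⟩))
  else if hx' : x ∈ B then
    (A.image ⇑σ ∪ B.image ⇑σ).orderEmbOfFin (cardT A B hA hB hd σ)
      (Fin.natAdd a (((B.image ⇑σ).orderIsoOfFin (cardTB B hB σ)).symm
        ⟨σ x, mem_image_of_mem _ hx'⟩))
  else σ x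

include hA hB hd in
private lemma bolf_apply_A {x : Fin n} (hx : x ∈ A) :
    bolf A B hA hB hd σ x =
    (A.image ⇑σ ∪ B.image ⇑σ).orderEmbOfFin (cardT A B hA hB hd σ)
      (Fin.castAdd b (((A.image ⇑σ).orderIsoOfFin (cardTA A hA σ)).symm
        ⟨σ x, mem_image_of_mem _ hx⟩)) :=
  dif_pos hx

include hA hB hd in
private lemma bolf_apply_B {x : Fin n} (hx : x ∈ B) :
    bolf A B hA hB hd σ x =
    (A.image ⇑σ ∪ B.image ⇑σ).orderEmbOfFin (cardT A B hA hB hd σ)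
      (Fin.natAdd a (((B.image ⇑σ).orderIsoOfFin (cardTB B hB σ)).symm
        ⟨σ x, mem_image_of_mem _ hx⟩)) := by
  have hxA : x ∉ A := fun h => (disjoint_left.1 hd h) hx
  rw [bolf, dif_neg hxA, dif_pos hx]

include hA hB hd in
private lemma bolf_apply_nmem {x : Fin n} (hx : x ∉ A) (hx' : x ∉ B) :
    bolf A B hA hB hd σ x = σ x := by
  rw [bolf, dif_neg hx, dif_neg hx']

private lemma sigma_mem_T_iff {x : Fin n} :
    σ x ∈ A.image ⇑σ ∪ B.image ⇑σ ↔ x ∈ A ∪ B := by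
  simp only [mem_union, mem_image, σ.injective.eq_iff]
  constructor
  · rintro (⟨z, hz, rfl⟩ | ⟨z, hz, rfl⟩)
    · exact Or.inl hz
    · exact Or.inr hz
  · rintro (h | h)
    · exact Or.inl ⟨x, h, rfl⟩
    · exact Or.inr ⟨x, h, rfl⟩

include hA hB hd in
private lemma bolf_mem_T {x : Fin n} (hx : x ∈ A ∪ B) :
    bolf A B hA hB hd σ x ∈ A.image ⇑σ ∪ B.image ⇑σ := by
  rcases mem_union.1 hx with h | h
  · rw [bolf_apply_A A B hA hB hd σ h]; exact orderEmbOfFin_mem _ _ _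
  · rw [bolf_apply_B A B hA hB hd σ h]; exact orderEmbOfFin_mem _ _ _

include hA hB hd in
private lemma bolf_lt {x y : Fin n} (hx : x ∈ A) (hy : y ∈ B) :
    bolf A B hA hB hd σ x < bolf A B hA hB hd σ y := by
  rw [bolf_apply_A A B hA hB hd σ hx, bolf_apply_B A B hA hB hd σ hy]
  apply (OrderEmbedding.lt_iff_lt _).2
  have h1 := (((A.image ⇑σ).orderIsoOfFin (cardTA A hA σ)).symm
        ⟨σ x, mem_image_of_mem _ hx⟩).isLt
  simp only [Fin.lt_iff_val_lt_val, Fin.coe_castAdd, Fin.coe_natAdd]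
  omega

include hA hB hd in
private lemma bolf_inj : Function.Injective (bolf A B hA hB hd σ) := by
  intro x y hxy
  by_cases hx : x ∈ A <;> by_cases hx' : x ∈ B <;> by_cases hy : y ∈ A <;> by_cases hy' : y ∈ B
  all_goals try exact absurd hx' (disjoint_left.1 hd hx)
  all_goals try exact absurd hy' (disjoint_left.1 hd hy)
  · -- A A
    rw [bolf_apply_A A B hA hB hd σ hx, bolf_apply_A A B hA hB hd σ hy] at hxy
    have h1 := (RelEmbedding.injective _) hxy
    have h2 : (((A.image ⇑σ).orderIsoOfFin (cardTA A hA σ)).symm ⟨σ x, mem_image_of_mem _ hx⟩)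
        = (((A.image ⇑σ).orderIsoOfFin (cardTA A hA σ)).symm ⟨σ y, mem_image_of_mem _ hy⟩) := by
      have := congrArg Fin.val h1
      simp only [Fin.coe_castAdd] at this
      exact Fin.ext this
    have h3 := congrArg Subtype.val (((A.image ⇑σ).orderIsoOfFin (cardTA A hA σ)).symm.injective h2)
    exact σ.injective h3
  · -- A B
    rw [bolf_apply_A A B hA hB hd σ hx, bolf_apply_B A B hA hB hd σ hy'] at hxy
    have h1 := congrArg Fin.val ((RelEmbedding.injective _) hxy)
    have h2 := (((A.image ⇑σ).orderIsoOfFin (cardTA A hA σ)).symm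
        ⟨σ x, mem_image_of_mem _ hx⟩).isLt
    simp only [Fin.coe_castAdd, Fin.coe_natAdd] at h1
    omega
  · -- A none
    exfalso
    rw [bolf_apply_A A B hA hB hd σ hx] at hxy
    rw [bolf_apply_nmem A B hA hB hd σ hy hy'] at hxy
    have : σ y ∈ A.image ⇑σ ∪ B.image ⇑σ := hxy ▸ orderEmbOfFin_mem _ _ _
    have := (sigma_mem_T_iff A B σ).1 this
    simp only [mem_union] at this
    tauto
  · -- B A
    rw [bolf_apply_B A B hA hB hd σ hx', bolf_apply_A A B hA hB hd σ hy] at hxy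
    have h1 := congrArg Fin.val ((RelEmbedding.injective _) hxy)
    have h2 := (((A.image ⇑σ).orderIsoOfFin (cardTA A hA σ)).symm
        ⟨σ y, mem_image_of_mem _ hy⟩).isLt
    simp only [Fin.coe_castAdd, Fin.coe_natAdd] at h1
    omega
  · -- B B
    rw [bolf_apply_B A B hA hB hd σ hx', bolf_apply_B A B hA hB hd σ hy'] at hxy
    have h1 := (RelEmbedding.injective _) hxy
    have h2 : (((B.image ⇑σ).orderIsoOfFin (cardTB B hB σ)).symm ⟨σ x, mem_image_of_mem _ hx'⟩)
        = (((B.image ⇑σ).orderIsoOfFin (cardTB B hB σ)).symm ⟨σ y, mem_image_of_mem _ hy'⟩) := by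
      have := congrArg Fin.val h1
      simp only [Fin.coe_natAdd] at this
      exact Fin.ext (by omega)
    have h3 := congrArg Subtype.val (((B.image ⇑σ).orderIsoOfFin (cardTB B hB σ)).symm.injective h2)
    exact σ.injective h3
  · -- B none
    exfalso
    rw [bolf_apply_B A B hA hB hd σ hx'] at hxy
    rw [bolf_apply_nmem A B hA hB hd σ hy hy'] at hxy
    have : σ y ∈ A.image ⇑σ ∪ B.image ⇑σ := hxy ▸ orderEmbOfFin_mem _ _ _
    have := (sigma_mem_T_iff A B σ).1 this
    simp only [mem_union] at this
    tauto
  · -- none A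
    exfalso
    rw [bolf_apply_A A B hA hB hd σ hy] at hxy
    rw [bolf_apply_nmem A B hA hB hd σ hx hx'] at hxy
    have : σ x ∈ A.image ⇑σ ∪ B.image ⇑σ := hxy ▸ orderEmbOfFin_mem _ _ _
    have := (sigma_mem_T_iff A B σ).1 this
    simp only [mem_union] at this
    tauto
  · -- none B
    exfalso
    rw [bolf_apply_B A B hA hB hd σ hy'] at hxy
    rw [bolf_apply_nmem A B hA hB hd σ hx hx'] at hxy
    have : σ x ∈ A.image ⇑σ ∪ B.image ⇑σ := hxy ▸ orderEmbOfFin_mem _ _ _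
    have := (sigma_mem_T_iff A B σ).1 this
    simp only [mem_union] at this
    tauto
  · -- none none
    rw [bolf_apply_nmem A B hA hB hd σ hx hx', bolf_apply_nmem A B hA hB hd σ hy hy'] at hxy
    exact σ.injective hxy

include hA hB hd in
private lemma bolf_bij : Function.Bijective (bolf A B hA hB hd σ) :=
  Finite.injective_iff_bijective.1 (bolf_inj A B hA hB hd σ)

include hA hB hd in
private lemma bolf_image :
    (A ∪ B).image (bolf A B hA hB hd σ) = A.image ⇑σ ∪ B.image ⇑σ := by
  apply eq_of_subset_of_card_le
  · intro y hy
    obtain ⟨x, hx, rfl⟩ := mem_image.1 hy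
    exact bolf_mem_T A B hA hB hd σ hx
  · rw [card_image_of_injective _ (bolf_inj A B hA hB hd σ), cardT A B hA hB hd σ,
      card_union_of_disjoint hd, hA, hB]

/-- The pattern finset. -/
private def bolP : Finset (Fin (a + b)) :=
  univ.filter (fun k =>
    (A.image ⇑σ ∪ B.image ⇑σ).orderEmbOfFin (cardT A B hA hB hd σ) k ∈ A.image ⇑σ)

include hA hB hd in
private lemma bolP_image :
    (bolP A B hA hB hd σ).image
      ((A.image ⇑σ ∪ B.image ⇑σ).orderEmbOfFin (cardT A B hA hB hd σ)) = A.image ⇑σ := by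
  apply Subset.antisymm
  · intro y hy
    obtain ⟨k, hk, rfl⟩ := mem_image.1 hy
    exact (mem_filter.1 hk).2
  · intro y hy
    have hyT : y ∈ A.image ⇑σ ∪ B.image ⇑σ := mem_union_left _ hy
    have : y ∈ Set.range ((A.image ⇑σ ∪ B.image ⇑σ).orderEmbOfFin (cardT A B hA hB hd σ)) := by
      rw [range_orderEmbOfFin]; exact hyT
    obtain ⟨k, rfl⟩ := this
    exact mem_image_of_mem _ (mem_filter.2 ⟨mem_univ _, hy⟩)

include hA hB hd in
private lemma bolP_card : (bolP A B hA hB hd σ).card = a := by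
  have h := congrArg Finset.card (bolP_image A B hA hB hd σ)
  rwa [card_image_of_injective _ (RelEmbedding.injective _), cardTA A hA σ] at h

include hA hB hd in
private lemma bol_main_inj (τ : Equiv.Perm (Fin n))
    (hf : bolf A B hA hB hd σ = bolf A B hA hB hd τ)
    (hP : bolP A B hA hB hd σ = bolP A B hA hB hd τ) : σ = τ := by
  have hT : A.image ⇑σ ∪ B.image ⇑σ = A.image ⇑τ ∪ B.image ⇑τ := by
    rw [← bolf_image A B hA hB hd σ, ← bolf_image A B hA hB hd τ, hf]
  have hTA : A.image ⇑σ = A.image ⇑τ := by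
    rw [← bolP_image A B hA hB hd σ, ← bolP_image A B hA hB hd τ, hP]
    apply image_congr
    intro k _
    exact embCongr hT _ _ k
  have hTB : B.image ⇑σ = B.image ⇑τ := by
    rw [← union_sdiff_cancel_left (disjT A B hd σ), ← union_sdiff_cancel_left (disjT A B hd τ),
      hT, hTA]
  apply Equiv.ext
  intro x
  by_cases hx : x ∈ A
  · have e1 := bolf_apply_A A B hA hB hd σ hx
    have e2 := bolf_apply_A A B hA hB hd τ hx
    have heq : (A.image ⇑σ ∪ B.image ⇑σ).orderEmbOfFin (cardT A B hA hB hd σ)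
        (Fin.castAdd b (((A.image ⇑σ).orderIsoOfFin (cardTA A hA σ)).symm
          ⟨σ x, mem_image_of_mem _ hx⟩)) =
        (A.image ⇑σ ∪ B.image ⇑σ).orderEmbOfFin (cardT A B hA hB hd σ)
        (Fin.castAdd b (((A.image ⇑τ).orderIsoOfFin (cardTA A hA τ)).symm
          ⟨τ x, mem_image_of_mem _ hx⟩)) := by
      rw [← e1, hf, e2]
      exact (embCongr hT.symm _ _ _)
    have hval := congrArg Fin.val ((RelEmbedding.injective _) heq)
    simp only [Fin.coe_castAdd] at hval
    have hσ : σ x = (A.image ⇑σ).orderEmbOfFin (cardTA A hA σ)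
        (((A.image ⇑σ).orderIsoOfFin (cardTA A hA σ)).symm ⟨σ x, mem_image_of_mem _ hx⟩) := by
      rw [← coe_orderIsoOfFin_apply, OrderIso.apply_symm_apply]
    have hτ : τ x = (A.image ⇑τ).orderEmbOfFin (cardTA A hA τ)
        (((A.image ⇑τ).orderIsoOfFin (cardTA A hA τ)).symm ⟨τ x, mem_image_of_mem _ hx⟩) := by
      rw [← coe_orderIsoOfFin_apply, OrderIso.apply_symm_apply]
    rw [hσ, hτ]
    rw [show ((A.image ⇑τ).orderIsoOfFin (cardTA A hA τ)).symm ⟨τ x, mem_image_of_mem _ hx⟩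
        = ((A.image ⇑σ).orderIsoOfFin (cardTA A hA σ)).symm ⟨σ x, mem_image_of_mem _ hx⟩
        from Fin.ext hval.symm]
    exact (embCongr hTA _ _ _)
  · by_cases hx' : x ∈ B
    · have e1 := bolf_apply_B A B hA hB hd σ hx'
      have e2 := bolf_apply_B A B hA hB hd τ hx'
      have heq : (A.image ⇑σ ∪ B.image ⇑σ).orderEmbOfFin (cardT A B hA hB hd σ)
          (Fin.natAdd a (((B.image ⇑σ).orderIsoOfFin (cardTB B hB σ)).symm
            ⟨σ x, mem_image_of_mem _ hx'⟩)) =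
          (A.image ⇑σ ∪ B.image ⇑σ).orderEmbOfFin (cardT A B hA hB hd σ)
          (Fin.natAdd a (((B.image ⇑τ).orderIsoOfFin (cardTB B hB τ)).symm
            ⟨τ x, mem_image_of_mem _ hx'⟩)) := by
        rw [← e1, hf, e2]
        exact (embCongr hT.symm _ _ _)
      have hval := congrArg Fin.val ((RelEmbedding.injective _) heq)
      simp only [Fin.coe_natAdd] at hval
      have hval' : (((B.image ⇑σ).orderIsoOfFin (cardTB B hB σ)).symm
          ⟨σ x, mem_image_of_mem _ hx'⟩ : Fin b).val
          = (((B.image ⇑τ).orderIsoOfFin (cardTB B hB τ)).symm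
          ⟨τ x, mem_image_of_mem _ hx'⟩ : Fin b).val := by omega
      have hσ : σ x = (B.image ⇑σ).orderEmbOfFin (cardTB B hB σ)
          (((B.image ⇑σ).orderIsoOfFin (cardTB B hB σ)).symm ⟨σ x, mem_image_of_mem _ hx'⟩) := by
        rw [← coe_orderIsoOfFin_apply, OrderIso.apply_symm_apply]
      have hτ : τ x = (B.image ⇑τ).orderEmbOfFin (cardTB B hB τ)
          (((B.image ⇑τ).orderIsoOfFin (cardTB B hB τ)).symm ⟨τ x, mem_image_of_mem _ hx'⟩) := by
        rw [← coe_orderIsoOfFin_apply, OrderIso.apply_symm_apply]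
      rw [hσ, hτ]
      rw [show ((B.image ⇑τ).orderIsoOfFin (cardTB B hB τ)).symm ⟨τ x, mem_image_of_mem _ hx'⟩
          = ((B.image ⇑σ).orderIsoOfFin (cardTB B hB σ)).symm ⟨σ x, mem_image_of_mem _ hx'⟩
          from Fin.ext hval'.symm]
      exact (embCongr hTB _ _ _)
    · have e1 := bolf_apply_nmem A B hA hB hd σ hx hx'
      have e2 := bolf_apply_nmem A B hA hB hd τ hx hx'
      rw [← e1, ← e2, hf]

end

private lemma bol_key (A B : Finset (Fin n)) (hA : A.card = a) (hB : B.card = b)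
    (hd : Disjoint A B) :
    n.factorial ≤ ((univ : Finset (Equiv.Perm (Fin n))).filter
      (fun σ => ∀ x ∈ A, ∀ y ∈ B, σ x < σ y)).card * (a + b).choose a := by
  classical
  set good : Equiv.Perm (Fin n) → Prop := fun σ => ∀ x ∈ A, ∀ y ∈ B, σ x < σ y with hgood
  have goodproof : ∀ σ : Equiv.Perm (Fin n),
      good (Equiv.ofBijective _ (bolf_bij A B hA hB hd σ)) := by
    intro σ x hx y hy
    exact bolf_lt A B hA hB hd σ hx hy
  have hcard := Fintype.card_le_of_injective (fun σ : Equiv.Perm (Fin n) =>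
      ((⟨Equiv.ofBijective _ (bolf_bij A B hA hB hd σ), goodproof σ⟩ :
          {σ : Equiv.Perm (Fin n) // good σ}),
        (⟨bolP A B hA hB hd σ, bolP_card A B hA hB hd σ⟩ :
          {P : Finset (Fin (a + b)) // P.card = a}))) (by
    intro σ τ h
    rw [Prod.mk.injEq, Subtype.mk.injEq, Subtype.mk.injEq] at h
    exact bol_main_inj A B hA hB hd σ τ
      (funext fun x => congrArg (fun e : Equiv.Perm (Fin n) => e x) h.1) h.2)
  rw [Fintype.card_perm, Fintype.card_fin, Fintype.card_prod, Fintype.card_finset_len,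
    Fintype.card_fin] at hcard
  rwa [Fintype.card_subtype] at hcard

end BollobasAux

theorem bollobas_uniform (n m a b : ℕ) (ha : 0 < a) (hb : 0 < b) (hab : a + b ≤ n)
    (A B : Fin m → Finset (Fin n))
    (hA : ∀ i, (A i).card = a) (hB : ∀ i, (B i).card = b)
    (hdisj : ∀ i, Disjoint (A i) (B i))
    (hcross : ∀ i j, i ≠ j → (A i ∩ B j).Nonempty) :
    m ≤ (a + b).choose a := by
  classical
  set F : Fin m → Finset (Equiv.Perm (Fin n)) :=
    fun i => Finset.univ.filter (fun σ => ∀ x ∈ A i, ∀ y ∈ B i, σ x < σ y) with hF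
  have key : ∀ i, n.factorial ≤ (F i).card * (a + b).choose a :=
    fun i => BollobasAux.bol_key (A i) (B i) (hA i) (hB i) (hdisj i)
  have hdisjF : ∀ i ∈ Finset.univ, ∀ j ∈ Finset.univ, i ≠ j → Disjoint (F i) (F j) := by
    intro i _ j _ hij
    rw [Finset.disjoint_left]
    intro σ hσi hσj
    obtain ⟨x, hx⟩ := hcross i j hij
    obtain ⟨y, hy⟩ := hcross j i hij.symm
    rw [Finset.mem_inter] at hx hy
    have h1 := (Finset.mem_filter.1 hσi).2 x hx.1 y hy.2
    have h2 := (Finset.mem_filter.1 hσj).2 y hy.1 x hx.2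
    exact absurd h2 (not_lt.2 h1.le)
  have hsum : ∑ i, (F i).card ≤ n.factorial := by
    rw [← Finset.card_biUnion hdisjF]
    calc (Finset.univ.biUnion F).card ≤ Fintype.card (Equiv.Perm (Fin n)) :=
          Finset.card_le_univ _
      _ = n.factorial := by rw [Fintype.card_perm, Fintype.card_fin]
  have hmain : m * n.factorial ≤ n.factorial * (a + b).choose a := by
    calc m * n.factorial = ∑ _i : Fin m, n.factorial := by
          rw [Finset.sum_const, Finset.card_univ, Fintype.card_fin, smul_eq_mul]
      _ ≤ ∑ i, (F i).card * (a + b).choose a := Finset.sum_le_sum (fun i _ => key i)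
      _ = (∑ i, (F i).card) * (a + b).choose a := (Finset.sum_mul _ _ _).symm
      _ ≤ n.factorial * (a + b).choose a := Nat.mul_le_mul_right _ hsum
  rw [mul_comm (n.factorial)] at hmain
  exact Nat.le_of_mul_le_mul_right hmain n.factorial_pos
end

section
/- Let {(A_i, B_i)}_{1≤i≤m} be a skew Bollobás system on [n] (A_i ∩ B_i = ∅ for all i, and A_i ∩ B_j ≠ ∅ for all 1 ≤ i < j ≤ m). Then ∑_{i=1}^m 1/C(|A_i|+|B_i|, |A_i|) ≤ n + 1. -/
open Finset Equiv

section rank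
variable {s : ℕ}

private def rankFun (R : Finset (Fin s)) (j : Fin s) : Fin s :=
  if h : (j : ℕ) < R.card then R.orderEmbOfFin rfl ⟨j, h⟩
  else Rᶜ.orderEmbOfFin (by simp [Finset.card_compl]) (⟨(j : ℕ) - R.card,
    Nat.sub_lt_sub_right (Nat.le_of_not_lt h) j.isLt⟩ : Fin (s - R.card))

private lemma rankFun_mem (R : Finset (Fin s)) (j : Fin s) :
    rankFun R j ∈ R ↔ (j : ℕ) < R.card := by
  unfold rankFun
  split
  · next h => simp [h, Finset.orderEmbOfFin_mem R rfl ⟨j, h⟩]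
  · next h =>
    simp only [h, iff_false]
    have := Finset.orderEmbOfFin_mem Rᶜ (by simp [Finset.card_compl] : Rᶜ.card = s - R.card)
      (⟨(j : ℕ) - R.card, Nat.sub_lt_sub_right (Nat.le_of_not_lt h) j.isLt⟩)
    simp only [Finset.mem_compl] at this
    exact this

private lemma rankFun_inj (R : Finset (Fin s)) : Function.Injective (rankFun R) := by
  intro j k hjk
  by_cases hj : (j : ℕ) < R.card <;> by_cases hk : (k : ℕ) < R.card
  · unfold rankFun at hjk
    rw [dif_pos hj, dif_pos hk] at hjk
    have h2 := congrArg Fin.val ((R.orderEmbOfFin rfl).injective hjk)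
    exact Fin.ext h2
  · exact absurd ((rankFun_mem R k).mp (hjk ▸ (rankFun_mem R j).mpr hj)) hk
  · exact absurd ((rankFun_mem R j).mp (hjk ▸ (rankFun_mem R k).mpr hk)) hj
  · unfold rankFun at hjk
    rw [dif_neg hj, dif_neg hk] at hjk
    have h2 : (j : ℕ) - R.card = (k : ℕ) - R.card :=
      congrArg Fin.val ((Rᶜ.orderEmbOfFin (by simp [Finset.card_compl])).injective hjk)
    have hj' := Nat.le_of_not_lt hj
    have hk' := Nat.le_of_not_lt hk
    exact Fin.ext (by omega)

private noncomputable def rankPerm (R : Finset (Fin s)) : Equiv.Perm (Fin s) :=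
  Equiv.ofBijective _ (Finite.injective_iff_bijective.mp (rankFun_inj R))

private lemma rankPerm_mem (R : Finset (Fin s)) (j : Fin s) :
    rankPerm R j ∈ R ↔ (j : ℕ) < R.card := rankFun_mem R j
end rank

section count
variable {n : ℕ} (A B : Finset (Fin n))

private def PP (σ : Equiv.Perm (Fin n)) : {t : Finset (Fin n) // t.card = (A ∪ B).card} :=
  ⟨(A ∪ B).image σ, Finset.card_image_of_injective _ σ.injective⟩

private noncomputable def kap (P : {t : Finset (Fin n) // t.card = (A ∪ B).card}) :
    Fin (A ∪ B).card ≃o {x // x ∈ P.1} := P.1.orderIsoOfFin P.2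

private noncomputable def rk (σ : Equiv.Perm (Fin n)) {x : Fin n} (hx : x ∈ A ∪ B) : Fin (A ∪ B).card :=
  (kap A B (PP A B σ)).symm ⟨σ x, Finset.mem_image_of_mem σ hx⟩

private noncomputable def RR (σ : Equiv.Perm (Fin n)) : Finset (Fin (A ∪ B).card) :=
  Finset.univ.filter (fun k => σ.symm ((kap A B (PP A B σ) k : {x // x ∈ (PP A B σ).1}) : Fin n) ∈ A)

private noncomputable def eA (P : {t : Finset (Fin n) // t.card = (A ∪ B).card})
    (R : Finset (Fin (A ∪ B).card)) : Equiv.Perm (Fin n) :=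
  Equiv.Perm.subtypeCongr
    ((kap A B P).toEquiv.symm.trans ((rankPerm R).symm.trans (kap A B P).toEquiv))
    (Equiv.refl _)

private noncomputable def FF (σ : Equiv.Perm (Fin n)) : Equiv.Perm (Fin n) :=
  σ.trans (eA A B (PP A B σ) (RR A B σ))

private lemma rk_mem_RR (σ : Equiv.Perm (Fin n)) {x : Fin n} (hx : x ∈ A ∪ B) :
    rk A B σ hx ∈ RR A B σ ↔ x ∈ A := by
  simp [RR, rk]

private lemma FF_apply (σ : Equiv.Perm (Fin n)) {x : Fin n} (hx : x ∈ A ∪ B) :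
    FF A B σ x = ((kap A B (PP A B σ)) ((rankPerm (RR A B σ)).symm (rk A B σ hx)) : {x // x ∈ (PP A B σ).1}) := by
  have hmem : σ x ∈ (PP A B σ).1 := Finset.mem_image_of_mem σ hx
  show (eA A B (PP A B σ) (RR A B σ)) (σ x) = _
  rw [eA, Equiv.Perm.subtypeCongr.left_apply _ _ hmem]
  rfl
end count

section count2
variable {n : ℕ} (A B : Finset (Fin n))

private lemma RR_card (σ : Equiv.Perm (Fin n)) : (RR A B σ).card = A.card := by
  apply Finset.card_bij (fun k _ => σ.symm ((kap A B (PP A B σ) k : {x // x ∈ (PP A B σ).1}) : Fin n))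
  · intro k hk
    simpa [RR] using hk
  · intro k₁ h₁ k₂ h₂ h
    exact (kap A B (PP A B σ)).injective (Subtype.ext (σ.symm.injective h))
  · intro x hx
    have hxS : x ∈ A ∪ B := Finset.mem_union_left B hx
    refine ⟨rk A B σ hxS, (rk_mem_RR A B σ hxS).mpr hx, ?_⟩
    simp [rk]

private lemma FF_win (hAB : Disjoint A B) (σ : Equiv.Perm (Fin n)) :
    ∀ x ∈ A, ∀ y ∈ B, FF A B σ x < FF A B σ y := by
  intro x hx y hy
  have hxS : x ∈ A ∪ B := Finset.mem_union_left B hx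
  have hyS : y ∈ A ∪ B := Finset.mem_union_right A hy
  rw [FF_apply A B σ hxS, FF_apply A B σ hyS]
  have hkx : rk A B σ hxS ∈ RR A B σ := (rk_mem_RR A B σ hxS).mpr hx
  have hky : rk A B σ hyS ∉ RR A B σ := by
    rw [rk_mem_RR A B σ hyS]
    exact fun h => (Finset.disjoint_left.mp hAB h) hy
  set jx := (rankPerm (RR A B σ)).symm (rk A B σ hxS) with hjx
  set jy := (rankPerm (RR A B σ)).symm (rk A B σ hyS) with hjy
  have h1 : (jx : ℕ) < (RR A B σ).card := by
    rw [← rankPerm_mem (RR A B σ) jx]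
    rwa [hjx, Equiv.apply_symm_apply]
  have h2 : ¬ (jy : ℕ) < (RR A B σ).card := by
    rw [← rankPerm_mem (RR A B σ) jy]
    rw [hjy, Equiv.apply_symm_apply]
    exact hky
  have hlt : jx < jy := by
    have : (jx : ℕ) < (jy : ℕ) := lt_of_lt_of_le h1 (Nat.le_of_not_lt h2)
    exact this
  exact Subtype.coe_lt_coe.mpr ((kap A B (PP A B σ)).lt_iff_lt.mpr hlt)

private lemma FF_image (σ : Equiv.Perm (Fin n)) :
    (A ∪ B).image (FF A B σ) = (PP A B σ).1 := by
  apply Finset.eq_of_subset_of_card_le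
  · intro z hz
    rw [Finset.mem_image] at hz
    obtain ⟨x, hx, rfl⟩ := hz
    rw [FF_apply A B σ hx]
    exact Subtype.mem _
  · rw [(PP A B σ).2, Finset.card_image_of_injective _ (FF A B σ).injective]

private lemma FF_inj (σ₁ σ₂ : Equiv.Perm (Fin n)) (hF : FF A B σ₁ = FF A B σ₂)
    (hR : RR A B σ₁ = RR A B σ₂) : σ₁ = σ₂ := by
  have hP : PP A B σ₁ = PP A B σ₂ := by
    apply Subtype.ext
    show (PP A B σ₁).1 = (PP A B σ₂).1
    rw [← FF_image A B σ₁, ← FF_image A B σ₂, hF]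
  have he : eA A B (PP A B σ₁) (RR A B σ₁) = eA A B (PP A B σ₂) (RR A B σ₂) := by
    rw [hP, hR]
  apply Equiv.ext
  intro x
  have h1 : (eA A B (PP A B σ₂) (RR A B σ₂)) (σ₁ x) = (eA A B (PP A B σ₂) (RR A B σ₂)) (σ₂ x) := by
    have := congrFun (congrArg (fun (e : Equiv.Perm (Fin n)) => (e : Fin n → Fin n)) hF) x
    simpa [FF, he] using this
  exact (eA A B (PP A B σ₂) (RR A B σ₂)).injective h1

private lemma count_lemma (hAB : Disjoint A B) :
    Nat.factorial n ≤ ((A ∪ B).card.choose A.card) *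
      (Finset.univ.filter
        (fun σ : Equiv.Perm (Fin n) => ∀ x ∈ A, ∀ y ∈ B, σ x < σ y)).card := by
  classical
  have key : (Finset.univ : Finset (Equiv.Perm (Fin n))).card ≤
      ((Finset.univ.filter
        (fun σ : Equiv.Perm (Fin n) => ∀ x ∈ A, ∀ y ∈ B, σ x < σ y)) ×ˢ
        ((Finset.univ : Finset (Fin (A ∪ B).card)).powersetCard A.card)).card := by
    apply Finset.card_le_card_of_injOn (fun σ => (FF A B σ, RR A B σ))
    · intro σ _
      rw [Finset.mem_coe, Finset.mem_product]
      constructor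
      · rw [Finset.mem_filter]
        exact ⟨Finset.mem_univ _, FF_win A B hAB σ⟩
      · rw [Finset.mem_powersetCard]
        exact ⟨Finset.subset_univ _, RR_card A B σ⟩
    · intro σ₁ _ σ₂ _ h
      exact FF_inj A B σ₁ σ₂ (congrArg Prod.fst h) (congrArg Prod.snd h)
  rw [Finset.card_univ, Fintype.card_perm, Fintype.card_fin] at key
  rw [Finset.card_product, Finset.card_powersetCard, Finset.card_univ, Fintype.card_fin] at key
  rw [Nat.mul_comm]
  exact key
end count2

private lemma winners_le {n m : ℕ} (A B : Fin m → Finset (Fin n))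
    (hskew : ∀ i j, i < j → (A i ∩ B j).Nonempty) (σ : Equiv.Perm (Fin n)) :
    (Finset.univ.filter
      (fun i => ∀ x ∈ A i, ∀ y ∈ B i, σ x < σ y)).card ≤ n + 1 := by
  classical
  set v : Fin m → ℕ := fun i =>
    if h : (A i).Nonempty then (((A i).image σ).max' (h.image σ)).val + 1 else 0 with hv
  have hkey : ∀ i ∈ Finset.univ.filter (fun i => ∀ x ∈ A i, ∀ y ∈ B i, σ x < σ y),
      ∀ j ∈ Finset.univ.filter (fun i => ∀ x ∈ A i, ∀ y ∈ B i, σ x < σ y),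
      i < j → v j < v i := by
    intro i hi j hj hij
    rw [Finset.mem_filter] at hi hj
    obtain ⟨x, hxAB⟩ := hskew i j hij
    rw [Finset.mem_inter] at hxAB
    obtain ⟨hxA, hxB⟩ := hxAB
    have hAi : (A i).Nonempty := ⟨x, hxA⟩
    have hle : (σ x : ℕ) ≤ (((A i).image σ).max' (hAi.image σ)).val :=
      Fin.le_iff_val_le_val.mp (Finset.le_max' _ _ (Finset.mem_image_of_mem σ hxA))
    rw [hv]
    simp only [dif_pos hAi]
    by_cases hAj : (A j).Nonempty
    · simp only [dif_pos hAj]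
      have hmem := ((A j).image σ).max'_mem (hAj.image σ)
      rw [Finset.mem_image] at hmem
      obtain ⟨a, haA, ha⟩ := hmem
      have : σ a < σ x := hj.2 a haA x hxB
      rw [← ha] at *
      have := Fin.lt_iff_val_lt_val.mp this
      omega
    · simp only [dif_neg hAj]
      omega
  have hmaps : ∀ i ∈ Finset.univ.filter (fun i => ∀ x ∈ A i, ∀ y ∈ B i, σ x < σ y),
      v i ∈ Finset.range (n + 1) := by
    intro i _
    rw [Finset.mem_range, hv]
    dsimp only
    split
    · next h => exact Nat.succ_lt_succ (((A i).image σ).max' (h.image σ)).isLt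
    · omega
  have hinj : Set.InjOn v (Finset.univ.filter (fun i => ∀ x ∈ A i, ∀ y ∈ B i, σ x < σ y)) := by
    intro i hi j hj hvij
    rcases lt_trichotomy i j with h | h | h
    · exact absurd hvij.symm (Nat.ne_of_lt (hkey i (Finset.mem_coe.mp hi) j (Finset.mem_coe.mp hj) h))
    · exact h
    · exact absurd hvij (Nat.ne_of_lt (hkey j (Finset.mem_coe.mp hj) i (Finset.mem_coe.mp hi) h))
  calc (Finset.univ.filter (fun i => ∀ x ∈ A i, ∀ y ∈ B i, σ x < σ y)).card
      ≤ (Finset.range (n + 1)).card := Finset.card_le_card_of_injOn v hmaps hinj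
    _ = n + 1 := Finset.card_range _

theorem skew_bollobas_inequality (n m : ℕ) (A B : Fin m → Finset (Fin n))
    (hdisj : ∀ i, Disjoint (A i) (B i))
    (hskew : ∀ i j, i < j → (A i ∩ B j).Nonempty) :
    ∑ i, (1 : ℚ) / (((A i).card + (B i).card).choose (A i).card) ≤ n + 1 := by
  classical
  set W : Fin m → ℕ := fun i => (Finset.univ.filter
      (fun σ : Equiv.Perm (Fin n) => ∀ x ∈ A i, ∀ y ∈ B i, σ x < σ y)).card with hW
  have hcount : ∀ i, Nat.factorial n ≤ (((A i).card + (B i).card).choose (A i).card) * W i := by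
    intro i
    have := count_lemma (A i) (B i) (hdisj i)
    rwa [Finset.card_union_of_disjoint (hdisj i)] at this
  have hsum : ∑ i, W i ≤ (n + 1) * Nat.factorial n := by
    have swap : ∑ i, W i = ∑ σ : Equiv.Perm (Fin n),
        (Finset.univ.filter (fun i => ∀ x ∈ A i, ∀ y ∈ B i, σ x < σ y)).card := by
      simp only [hW, Finset.card_filter]
      exact Finset.sum_comm
    rw [swap]
    calc ∑ σ : Equiv.Perm (Fin n),
          (Finset.univ.filter (fun i => ∀ x ∈ A i, ∀ y ∈ B i, σ x < σ y)).card
        ≤ ∑ _σ : Equiv.Perm (Fin n), (n + 1) :=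
          Finset.sum_le_sum (fun σ _ => winners_le A B hskew σ)
      _ = (Fintype.card (Equiv.Perm (Fin n))) * (n + 1) := by
          rw [Finset.sum_const, Finset.card_univ, smul_eq_mul]
      _ = (n + 1) * Nat.factorial n := by
          rw [Fintype.card_perm, Fintype.card_fin, Nat.mul_comm]
  have hfact : (0 : ℚ) < (Nat.factorial n : ℚ) := by positivity
  have step1 : ∀ i, (1 : ℚ) / (((A i).card + (B i).card).choose (A i).card)
      ≤ (W i : ℚ) / (Nat.factorial n : ℚ) := by
    intro i
    have hC : 0 < (((A i).card + (B i).card).choose (A i).card) :=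
      Nat.choose_pos (Nat.le_add_right _ _)
    have hCq : (0 : ℚ) < ((((A i).card + (B i).card).choose (A i).card : ℕ) : ℚ) := by
      exact_mod_cast hC
    rw [div_le_div_iff₀ hCq hfact]
    have := hcount i
    have : ((Nat.factorial n : ℕ) : ℚ) ≤
        (((((A i).card + (B i).card).choose (A i).card) * W i : ℕ) : ℚ) := by exact_mod_cast this
    push_cast at this ⊢
    linarith
  calc ∑ i, (1 : ℚ) / (((A i).card + (B i).card).choose (A i).card)
      ≤ ∑ i, (W i : ℚ) / (Nat.factorial n : ℚ) := Finset.sum_le_sum (fun i _ => step1 i)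
    _ = (∑ i, (W i : ℕ) : ℚ) / (Nat.factorial n : ℚ) := by
        rw [Finset.sum_div]
    _ ≤ ((n + 1) * Nat.factorial n : ℚ) / (Nat.factorial n : ℚ) := by
        gcongr
        exact_mod_cast hsum
    _ = (n + 1 : ℚ) := by field_simp
end

section
/- If {(A_i, B_i)}_{1≤i≤m} is a skew Bollobás system on [n] with ∑_{i=1}^m 1/C(|A_i|+|B_i|, |A_i|) = n + 1, then B_i = [n] \ A_i for all 1 ≤ i ≤ m. -/
open Finset

/-- rank of `x` among `S` under the ordering induced by `σ`. -/
private def rnk {n : ℕ} (S : Finset (Fin n)) (σ : Equiv.Perm (Fin n)) (x : Fin n) : ℕ :=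
  (S.filter fun y => σ y < σ x).card

/-- The set of elements of `A ∪ B` whose `σ`-rank is `< |A|`. -/
private def Gset {n : ℕ} (A B : Finset (Fin n)) (σ : Equiv.Perm (Fin n)) : Finset (Fin n) :=
  (A ∪ B).filter (fun x => rnk (A ∪ B) σ x < A.card)

/-- Threshold set. -/
private def Tset (n : ℕ) (A B : Finset (Fin n)) (σ : Equiv.Perm (Fin n)) : Finset ℕ :=
  (Finset.range (n + 1)).filter
    (fun t => (∀ x ∈ A, (σ x : ℕ) < t) ∧ (∀ y ∈ B, t ≤ (σ y : ℕ)))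

private lemma rnk_strictMono {n : ℕ} (S : Finset (Fin n)) (σ : Equiv.Perm (Fin n))
    {x x' : Fin n} (hx : x ∈ S) (h : σ x < σ x') : rnk S σ x < rnk S σ x' := by
  have hsub : (S.filter fun y => σ y < σ x) ⊆ (S.filter fun y => σ y < σ x') := by
    intro y hy
    simp only [Finset.mem_filter] at *
    exact ⟨hy.1, hy.2.trans h⟩
  apply Finset.card_lt_card
  rw [Finset.ssubset_iff_of_subset hsub]
  refine ⟨x, ?_, ?_⟩
  · simp only [Finset.mem_filter]; exact ⟨hx, h⟩
  · simp only [Finset.mem_filter]; intro hc; exact absurd hc.2 (lt_irrefl _)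

private lemma rnk_injOn {n : ℕ} (S : Finset (Fin n)) (σ : Equiv.Perm (Fin n)) :
    Set.InjOn (rnk S σ) S := by
  intro x hx x' hx' hxx
  by_contra hne
  have hσ : σ x ≠ σ x' := fun h => hne (σ.injective h)
  rcases hσ.lt_or_gt with h | h
  · exact absurd hxx (Nat.ne_of_lt (rnk_strictMono S σ hx h))
  · exact absurd hxx.symm (Nat.ne_of_lt (rnk_strictMono S σ hx' h))

private lemma rnk_image {n : ℕ} (S : Finset (Fin n)) (σ : Equiv.Perm (Fin n)) :
    S.image (rnk S σ) = Finset.range S.card := by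
  apply Finset.eq_of_subset_of_card_le
  · intro k hk
    simp only [Finset.mem_image] at hk
    obtain ⟨x, hx, rfl⟩ := hk
    rw [Finset.mem_range]
    calc rnk S σ x ≤ (S.erase x).card := Finset.card_le_card (by
          intro y hy
          simp only [Finset.mem_filter] at hy
          exact Finset.mem_erase.mpr ⟨fun h => absurd (h ▸ hy.2) (lt_irrefl _), hy.1⟩)
      _ < S.card := Finset.card_erase_lt_of_mem hx
  · rw [Finset.card_range, Finset.card_image_of_injOn (rnk_injOn S σ)]

private lemma G_card {n : ℕ} (A B : Finset (Fin n)) (σ : Equiv.Perm (Fin n)) :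
    (Gset A B σ).card = A.card := by
  classical
  have h1 : ((A ∪ B).filter (fun x => rnk (A ∪ B) σ x < A.card)).image (rnk (A ∪ B) σ)
      = (Finset.range (A ∪ B).card).filter (· < A.card) := by
    rw [← rnk_image (A ∪ B) σ, Finset.filter_image]
  have hcard : (Gset A B σ).card
      = ((Finset.range (A ∪ B).card).filter (· < A.card)).card := by
    rw [Gset, ← h1,
      Finset.card_image_of_injOn ((rnk_injOn (A ∪ B) σ).mono
        (Finset.coe_subset.mpr (Finset.filter_subset _ _)))]
  rw [hcard]
  have hA : A.card ≤ (A ∪ B).card := Finset.card_le_card Finset.subset_union_left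
  have h2 : (Finset.range (A ∪ B).card).filter (· < A.card) = Finset.range A.card := by
    ext t
    simp only [Finset.mem_filter, Finset.mem_range]
    omega
  rw [h2, Finset.card_range]

private lemma G_eq_imp_compat {n : ℕ} (A B : Finset (Fin n)) (σ : Equiv.Perm (Fin n))
    (hd : Disjoint A B) (h : Gset A B σ = A) :
    ∀ x ∈ A, ∀ y ∈ B, σ x < σ y := by
  intro x hx y hy
  by_contra hc
  push_neg at hc
  have hxy : y ≠ x := by
    intro h'
    exact absurd hx (Finset.disjoint_right.mp hd (h' ▸ hy))
  have hσ : σ y < σ x := lt_of_le_of_ne hc (fun h' => hxy (σ.injective h'))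
  have hyS : y ∈ A ∪ B := Finset.mem_union_right _ hy
  have hynG : y ∉ Gset A B σ := by rw [h]; exact Finset.disjoint_right.mp hd hy
  have hxG : x ∈ Gset A B σ := by rw [h]; exact hx
  simp only [Gset, Finset.mem_filter] at hxG hynG
  push_neg at hynG
  have h2 := hynG hyS
  have h3 := hxG.2
  have hle : rnk (A ∪ B) σ y ≤ rnk (A ∪ B) σ x :=
    Finset.card_le_card (fun z hz => by
      simp only [Finset.mem_filter] at *
      exact ⟨hz.1, hz.2.trans hσ⟩)
  omega

private lemma G_comp {n : ℕ} (A B : Finset (Fin n)) (σ π : Equiv.Perm (Fin n))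
    (hS : (A ∪ B).image π = A ∪ B) (hA : A.image π = Gset A B σ) :
    Gset A B (π.trans σ) = A := by
  classical
  have hr : ∀ x : Fin n, rnk (A ∪ B) (π.trans σ) x = rnk (A ∪ B) σ (π x) := by
    intro x
    have h1 : ((A ∪ B).image π).filter (fun y => σ y < σ (π x))
        = ((A ∪ B).filter fun y => σ (π y) < σ (π x)).image π :=
      Finset.filter_image
    calc rnk (A ∪ B) (π.trans σ) x
        = ((A ∪ B).filter fun y => σ (π y) < σ (π x)).card := rfl
      _ = (((A ∪ B).filter fun y => σ (π y) < σ (π x)).image π).card := by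
          rw [Finset.card_image_of_injective _ π.injective]
      _ = (((A ∪ B).image π).filter (fun y => σ y < σ (π x))).card := by rw [h1]
      _ = rnk (A ∪ B) σ (π x) := by rw [hS]; rfl
  have hmemS : ∀ x : Fin n, x ∈ A ∪ B → π x ∈ A ∪ B := by
    intro x hx
    rw [← hS]
    exact Finset.mem_image_of_mem _ hx
  ext x
  simp only [Gset, Finset.mem_filter, hr]
  constructor
  · rintro ⟨hxS, hlt⟩
    have hmem : π x ∈ Gset A B σ := by
      simp only [Gset, Finset.mem_filter]
      exact ⟨hmemS x hxS, hlt⟩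
    rw [← hA] at hmem
    obtain ⟨x', hx', hxx⟩ := Finset.mem_image.mp hmem
    rwa [← π.injective hxx]
  · intro hxA
    refine ⟨Finset.mem_union_left _ hxA, ?_⟩
    have hmem : π x ∈ Gset A B σ := by
      rw [← hA]
      exact Finset.mem_image_of_mem _ hxA
    simp only [Gset, Finset.mem_filter] at hmem
    exact hmem.2

private lemma exists_perm {n : ℕ} (S A U : Finset (Fin n)) (hAS : A ⊆ S) (hUS : U ⊆ S)
    (hcard : A.card = U.card) :
    ∃ π : Equiv.Perm (Fin n), S.image π = S ∧ A.image π = U := by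
  classical
  have hc1 : Fintype.card A = Fintype.card U := by
    rw [Fintype.card_coe, Fintype.card_coe, hcard]
  have hc2 : Fintype.card (S \ A : Finset (Fin n)) = Fintype.card (S \ U : Finset (Fin n)) := by
    rw [Fintype.card_coe, Fintype.card_coe, Finset.card_sdiff_of_subset hAS, Finset.card_sdiff_of_subset hUS, hcard]
  let φ : A ≃ U := Fintype.equivOfCardEq hc1
  let ψ : (S \ A : Finset (Fin n)) ≃ (S \ U : Finset (Fin n)) := Fintype.equivOfCardEq hc2
  let f : Fin n → Fin n := fun x =>
    if h1 : x ∈ A then (φ ⟨x, h1⟩ : Fin n)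
    else if h2 : x ∈ S \ A then (ψ ⟨x, h2⟩ : Fin n)
    else x
  have hfA : ∀ x (h : x ∈ A), f x = (φ ⟨x, h⟩ : Fin n) := fun x h => dif_pos h
  have hfB : ∀ x (h : x ∈ S \ A), f x = (ψ ⟨x, h⟩ : Fin n) := fun x h => by
    have h1 : x ∉ A := (Finset.mem_sdiff.mp h).2
    simp only [f, dif_neg h1, dif_pos h]
  have hfC : ∀ x, x ∉ S → f x = x := fun x h => by
    have h1 : x ∉ A := fun hx => h (hAS hx)
    have h2 : x ∉ S \ A := fun hx => h (Finset.mem_sdiff.mp hx).1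
    simp only [f, dif_neg h1, dif_neg h2]
  have hA' : ∀ x (h : x ∈ A), f x ∈ U := fun x h => by
    rw [hfA x h]; exact (φ ⟨x, h⟩).2
  have hB' : ∀ x (h : x ∈ S \ A), f x ∈ S \ U := fun x h => by
    rw [hfB x h]; exact (ψ ⟨x, h⟩).2
  have hinj : Function.Injective f := by
    intro x x' hxx
    by_cases c1 : x ∈ A
    · by_cases c2 : x' ∈ A
      · rw [hfA x c1, hfA x' c2] at hxx
        have := φ.injective (Subtype.coe_injective hxx)
        exact congrArg Subtype.val this
      · have hx : f x ∈ U := hA' x c1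
        by_cases c3 : x' ∈ S
        · have h' : f x' ∈ S \ U := hB' x' (Finset.mem_sdiff.mpr ⟨c3, c2⟩)
          rw [hxx] at hx
          exact absurd hx (Finset.mem_sdiff.mp h').2
        · rw [hfC x' c3] at hxx
          exact absurd (hxx ▸ hx) (fun h => c3 (hUS h))
    · by_cases c2 : x' ∈ A
      · have hx' : f x' ∈ U := hA' x' c2
        by_cases c3 : x ∈ S
        · have h' : f x ∈ S \ U := hB' x (Finset.mem_sdiff.mpr ⟨c3, c1⟩)
          rw [← hxx] at hx'
          exact absurd hx' (Finset.mem_sdiff.mp h').2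
        · rw [hfC x c3] at hxx
          exact absurd (hxx ▸ hx') (fun h => c3 (hUS h))
      · by_cases c3 : x ∈ S
        · by_cases c4 : x' ∈ S
          · have m1 : x ∈ S \ A := Finset.mem_sdiff.mpr ⟨c3, c1⟩
            have m2 : x' ∈ S \ A := Finset.mem_sdiff.mpr ⟨c4, c2⟩
            rw [hfB x m1, hfB x' m2] at hxx
            have := ψ.injective (Subtype.coe_injective hxx)
            exact congrArg Subtype.val this
          · have h' : f x ∈ S \ U := hB' x (Finset.mem_sdiff.mpr ⟨c3, c1⟩)
            rw [hfC x' c4] at hxx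
            rw [hxx] at h'
            exact absurd (Finset.mem_sdiff.mp h').1 c4
        · by_cases c4 : x' ∈ S
          · have h' : f x' ∈ S \ U := hB' x' (Finset.mem_sdiff.mpr ⟨c4, c2⟩)
            rw [hfC x c3] at hxx
            rw [← hxx] at h'
            exact absurd (Finset.mem_sdiff.mp h').1 c3
          · rw [hfC x c3, hfC x' c4] at hxx
            exact hxx
  let π : Equiv.Perm (Fin n) := Equiv.ofBijective f (Finite.injective_iff_bijective.mp hinj)
  have hπ : ∀ x, π x = f x := fun x => rfl
  have himA : A.image π = U := by
    apply Finset.eq_of_subset_of_card_le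
    · intro y hy
      obtain ⟨x, hx, rfl⟩ := Finset.mem_image.mp hy
      rw [hπ]
      exact hA' x hx
    · rw [Finset.card_image_of_injective _ π.injective, hcard]
  refine ⟨π, ?_, himA⟩
  apply Finset.eq_of_subset_of_card_le
  · intro y hy
    obtain ⟨x, hx, rfl⟩ := Finset.mem_image.mp hy
    rw [hπ]
    by_cases c1 : x ∈ A
    · exact hUS (hA' x c1)
    · exact (Finset.mem_sdiff.mp (hB' x (Finset.mem_sdiff.mpr ⟨hx, c1⟩))).1
  · rw [Finset.card_image_of_injective _ π.injective]

private lemma count_le {n : ℕ} (A B : Finset (Fin n)) (hd : Disjoint A B) :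
    Nat.factorial n ≤
      (Finset.univ.filter (fun σ : Equiv.Perm (Fin n) => Gset A B σ = A)).card
        * (A.card + B.card).choose A.card := by
  classical
  have hScard : (A ∪ B).card = A.card + B.card := Finset.card_union_of_disjoint hd
  have hchoice : ∀ U : Finset (Fin n), ∃ π : Equiv.Perm (Fin n),
      U ∈ (A ∪ B).powersetCard A.card → ((A ∪ B).image π = A ∪ B ∧ A.image π = U) := by
    intro U
    by_cases hU : U ∈ (A ∪ B).powersetCard A.card
    · obtain ⟨hUS, hUcard⟩ := Finset.mem_powersetCard.mp hU
      obtain ⟨π, h1, h2⟩ := exists_perm (A ∪ B) A U Finset.subset_union_left hUS hUcard.symm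
      exact ⟨π, fun _ => ⟨h1, h2⟩⟩
    · exact ⟨1, fun h => absurd h hU⟩
  choose Perm4U hPu using hchoice
  have hmaps : ∀ σ : Equiv.Perm (Fin n), Gset A B σ ∈ (A ∪ B).powersetCard A.card := by
    intro σ
    rw [Finset.mem_powersetCard]
    exact ⟨Finset.filter_subset _ _, G_card A B σ⟩
  have hcount := Finset.card_le_card_of_injOn
      (f := fun σ : Equiv.Perm (Fin n) => (((Perm4U (Gset A B σ)).trans σ), Gset A B σ))
      (s := (Finset.univ : Finset (Equiv.Perm (Fin n))))
      (t := (Finset.univ.filter (fun σ : Equiv.Perm (Fin n) => Gset A B σ = A))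
        ×ˢ (A ∪ B).powersetCard A.card)
      (by
        intro σ _
        rw [Finset.mem_coe, Finset.mem_product]
        refine ⟨?_, hmaps σ⟩
        rw [Finset.mem_filter]
        obtain ⟨h1, h2⟩ := hPu (Gset A B σ) (hmaps σ)
        exact ⟨Finset.mem_univ _, G_comp A B σ _ h1 h2⟩)
      (by
        intro σ1 _ σ2 _ heq
        simp only [Prod.mk.injEq] at heq
        obtain ⟨h1, h2⟩ := heq
        rw [h2] at h1
        apply Equiv.ext
        intro x
        have h3 := congrArg (fun (e : Equiv.Perm (Fin n)) => e ((Perm4U (Gset A B σ2)).symm x)) h1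
        simpa using h3)
  rw [Finset.card_univ, Fintype.card_perm, Fintype.card_fin] at hcount
  rwa [Finset.card_product, Finset.card_powersetCard, hScard] at hcount

private lemma Tset_nonempty {n : ℕ} (A B : Finset (Fin n)) (σ : Equiv.Perm (Fin n))
    (hcompat : ∀ x ∈ A, ∀ y ∈ B, σ x < σ y) : (Tset n A B σ).Nonempty := by
  classical
  refine ⟨A.sup (fun x => (σ x : ℕ) + 1), ?_⟩
  rw [Tset, Finset.mem_filter, Finset.mem_range]
  refine ⟨?_, ?_, ?_⟩
  · have h : A.sup (fun x => (σ x : ℕ) + 1) ≤ n := Finset.sup_le fun x _ => (σ x).isLt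
    omega
  · intro x hx
    have h : (σ x : ℕ) + 1 ≤ A.sup (fun y => (σ y : ℕ) + 1) :=
      Finset.le_sup (f := fun y => (σ y : ℕ) + 1) hx
    omega
  · intro y hy
    exact Finset.sup_le fun x hx => Nat.succ_le_of_lt (hcompat x hx y hy)

private lemma Tset_sum_le {n : ℕ} (m : ℕ) (A B : Fin m → Finset (Fin n))
    (hskew : ∀ i j, i < j → (A i ∩ B j).Nonempty) (σ : Equiv.Perm (Fin n)) :
    ∑ i, (Tset n (A i) (B i) σ).card ≤ n + 1 := by
  classical
  have key : ∀ i j, i < j → Disjoint (Tset n (A i) (B i) σ) (Tset n (A j) (B j) σ) := by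
    intro i j hij
    rw [Finset.disjoint_left]
    intro t hti htj
    obtain ⟨x, hx⟩ := hskew i j hij
    rw [Finset.mem_inter] at hx
    simp only [Tset, Finset.mem_filter] at hti htj
    have h1 := hti.2.1 x hx.1
    have h2 := htj.2.2 x hx.2
    omega
  have hdisj : ∀ i j, i ≠ j → Disjoint (Tset n (A i) (B i) σ) (Tset n (A j) (B j) σ) := by
    intro i j hij
    rcases hij.lt_or_gt with h | h
    · exact key i j h
    · exact (key j i h).symm
  calc ∑ i, (Tset n (A i) (B i) σ).card
      = (Finset.univ.biUnion (fun i => Tset n (A i) (B i) σ)).card :=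
        (Finset.card_biUnion (fun i _ j _ h => hdisj i j h)).symm
    _ ≤ (Finset.range (n + 1)).card := Finset.card_le_card (by
        intro t ht
        rw [Finset.mem_biUnion] at ht
        obtain ⟨i, _, hti⟩ := ht
        exact (Finset.mem_filter.mp hti).1)
    _ = n + 1 := Finset.card_range _

private lemma exists_perm_two {n : ℕ} (A B : Finset (Fin n)) (hd : Disjoint A B)
    (z : Fin n) (hzA : z ∉ A) (hzB : z ∉ B) :
    ∃ σ : Equiv.Perm (Fin n), 2 ≤ (Tset n A B σ).card := by
  classical
  set l1 : List (Fin n) := A.sort (· ≤ ·) with hl1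
  set l2 : List (Fin n) := B.sort (· ≤ ·) with hl2
  set l3 : List (Fin n) := ((A ∪ B ∪ {z})ᶜ).sort (· ≤ ·) with hl3
  set l : List (Fin n) := l1 ++ z :: (l2 ++ l3) with hl
  have hm1 : ∀ x, x ∈ l1 ↔ x ∈ A := fun x => Finset.mem_sort _
  have hm2 : ∀ x, x ∈ l2 ↔ x ∈ B := fun x => Finset.mem_sort _
  have hm3 : ∀ x, x ∈ l3 ↔ x ∉ A ∧ x ∉ B ∧ x ≠ z := by
    intro x
    rw [hl3, Finset.mem_sort, Finset.mem_compl]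
    simp [Finset.mem_union]
    tauto
  have hmem : ∀ x, x ∈ l := by
    intro x
    rw [hl]
    simp only [List.mem_append, List.mem_cons]
    by_cases h1 : x ∈ A
    · exact Or.inl ((hm1 x).mpr h1)
    by_cases h2 : x ∈ B
    · exact Or.inr (Or.inr (Or.inl ((hm2 x).mpr h2)))
    by_cases h3 : x = z
    · exact Or.inr (Or.inl h3)
    · exact Or.inr (Or.inr (Or.inr ((hm3 x).mpr ⟨h1, h2, h3⟩)))
  have hnd : l.Nodup := by
    rw [hl]
    apply List.Nodup.append (Finset.sort_nodup _ _)
    · rw [List.nodup_cons]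
      constructor
      · intro hc
        rcases List.mem_append.mp hc with h | h
        · exact hzB ((hm2 z).mp h)
        · exact ((hm3 z).mp h).2.2 rfl
      · apply List.Nodup.append (Finset.sort_nodup _ _) (Finset.sort_nodup _ _)
        intro x hx1 hx2
        exact ((hm3 x).mp hx2).2.1 ((hm2 x).mp hx1)
    · intro x hx1 hx2
      have hxA : x ∈ A := (hm1 x).mp hx1
      rcases List.mem_cons.mp hx2 with h | h
      · exact hzA (h ▸ hxA)
      · rcases List.mem_append.mp h with h' | h'
        · exact Finset.disjoint_left.mp hd hxA ((hm2 x).mp h')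
        · exact ((hm3 x).mp h').1 hxA
  have hlen : l.length = n := by
    have htf : l.toFinset = Finset.univ := by
      apply Finset.eq_univ_of_forall
      intro x
      rw [List.mem_toFinset]
      exact hmem x
    rw [← List.toFinset_card_of_nodup hnd, htf, Finset.card_univ, Fintype.card_fin]
  have ha_len : l1.length = A.card := Finset.length_sort _
  have hb_len : l2.length = B.card := Finset.length_sort _
  have hlen_split : l.length = l1.length + (1 + (l2.length + l3.length)) := by
    rw [hl]
    simp [List.length_append]
    omega
  have ha_lt : A.card < n := by omega
  -- the equivalence
  let e : Fin l.length ≃ Fin n := List.Nodup.getEquivOfForallMemList l hnd hmem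
  let σ : Equiv.Perm (Fin n) := e.symm.trans (finCongr hlen)
  have hσval : ∀ x : Fin n, (σ x : ℕ) = ((e.symm x : Fin l.length) : ℕ) := fun x => rfl
  have hσlt : ∀ x : Fin n, (σ x : ℕ) < l.length := fun x => (e.symm x).isLt
  have hget : ∀ x : Fin n, l[(σ x : ℕ)]'(hσlt x) = x := by
    intro x
    have h1 : e (e.symm x) = x := e.apply_symm_apply x
    calc l[(σ x : ℕ)]'(hσlt x) = l.get (e.symm x) := rfl
      _ = e (e.symm x) := rfl
      _ = x := h1
  have mA : ∀ (k : ℕ) (hk : k < l.length), k < A.card → l[k] ∈ A := by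
    intro k hk h
    have h1 : k < l1.length := by omega
    have h2 : l[k] = l1[k]'h1 := List.getElem_append_left h1
    rw [h2]
    exact (hm1 _).mp (List.getElem_mem _)
  have hacard_lt : A.card < l.length := by omega
  have mz : l[A.card]'hacard_lt = z := by
    have h1 : l1.length ≤ A.card := by omega
    have h2 : l[A.card]'hacard_lt = (z :: (l2 ++ l3))[A.card - l1.length]'(by
        rw [List.length_cons, List.length_append]; omega) :=
      List.getElem_append_right h1
    have h3 : A.card - l1.length = 0 := by omega
    rw [h2]
    simp [h3]
  have hmain : ∀ (k : ℕ) (hk : k < l.length),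
      (k < A.card → l[k] ∈ A) ∧ (k = A.card → l[k] = z) ∧
      (A.card < k → l[k] ∈ B ∨ (l[k] ∉ A ∧ l[k] ∉ B ∧ l[k] ≠ z)) := by
    intro k hk
    refine ⟨mA k hk, ?_, ?_⟩
    · intro h
      subst h
      exact mz
    · intro h
      have hmemk : l[k] ∈ l1 ∨ (l[k] = z ∨ (l[k] ∈ l2 ∨ l[k] ∈ l3)) := by
        have h0 : l[k] ∈ l1 ++ z :: (l2 ++ l3) := List.getElem_mem _
        rcases List.mem_append.mp h0 with h' | h'
        · exact Or.inl h'
        rcases List.mem_cons.mp h' with h'' | h''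
        · exact Or.inr (Or.inl h'')
        rcases List.mem_append.mp h'' with h3 | h3
        · exact Or.inr (Or.inr (Or.inl h3))
        · exact Or.inr (Or.inr (Or.inr h3))
      rcases hmemk with h' | h' | h' | h'
      · exfalso
        obtain ⟨j, hj, hjk⟩ := List.mem_iff_getElem.mp h'
        have hjl : j < l.length := by omega
        have h2 : l[j]'hjl = l1[j]'hj := List.getElem_append_left hj
        have h3 : l[j]'hjl = l[k]'hk := by rw [h2, hjk]
        have := (hnd.getElem_inj_iff).mp h3
        omega
      · exfalso
        have h3 : l[k]'hk = l[A.card]'hacard_lt := by rw [h', mz]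
        have := (hnd.getElem_inj_iff).mp h3
        omega
      · exact Or.inl ((hm2 _).mp h')
      · exact Or.inr ((hm3 _).mp h')
  have hAidx : ∀ x ∈ A, (σ x : ℕ) < A.card := by
    intro x hx
    by_contra hc
    push_neg at hc
    obtain ⟨g1, g2, g3⟩ := hmain (σ x : ℕ) (hσlt x)
    rcases Nat.lt_or_ge A.card (σ x : ℕ) with h | h
    · rcases g3 h with h' | h'
      · rw [hget x] at h'
        exact Finset.disjoint_left.mp hd hx h'
      · rw [hget x] at h'
        exact h'.1 hx
    · have h' : (σ x : ℕ) = A.card := by omega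
      have := g2 h'
      rw [hget x] at this
      exact hzA (this ▸ hx)
  have hzidx : (σ z : ℕ) = A.card := by
    obtain ⟨g1, g2, g3⟩ := hmain (σ z : ℕ) (hσlt z)
    rcases lt_trichotomy ((σ z : ℕ)) A.card with h | h | h
    · exfalso
      have := g1 h
      rw [hget z] at this
      exact hzA this
    · exact h
    · exfalso
      rcases g3 h with h' | h'
      · rw [hget z] at h'
        exact hzB h'
      · rw [hget z] at h'
        exact h'.2.2 rfl
  have hBidx : ∀ y ∈ B, A.card + 1 ≤ (σ y : ℕ) := by
    intro y hy
    obtain ⟨g1, g2, g3⟩ := hmain (σ y : ℕ) (hσlt y)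
    rcases lt_trichotomy ((σ y : ℕ)) A.card with h | h | h
    · exfalso
      have := g1 h
      rw [hget y] at this
      exact Finset.disjoint_right.mp hd hy this
    · exfalso
      have := g2 h
      rw [hget y] at this
      exact hzB (this ▸ hy)
    · omega
  refine ⟨σ, ?_⟩
  have hmemT : ∀ t, t = A.card ∨ t = A.card + 1 → t ∈ Tset n A B σ := by
    intro t ht
    rw [Tset, Finset.mem_filter, Finset.mem_range]
    refine ⟨by omega, ?_, ?_⟩
    · intro x hx
      have := hAidx x hx
      omega
    · intro y hy
      have := hBidx y hy
      omega
  have h1 : A.card ∈ Tset n A B σ := hmemT _ (Or.inl rfl)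
  have h2 : A.card + 1 ∈ Tset n A B σ := hmemT _ (Or.inr rfl)
  have : 1 < (Tset n A B σ).card := Finset.one_lt_card.mpr ⟨_, h1, _, h2, by omega⟩
  omega

theorem skew_bollobas_equality_case (n m : ℕ) (A B : Fin m → Finset (Fin n))
    (hdisj : ∀ i, Disjoint (A i) (B i))
    (hskew : ∀ i j, i < j → (A i ∩ B j).Nonempty)
    (heq : ∑ i, (1 : ℚ) / (((A i).card + (B i).card).choose (A i).card) = n + 1) :
    ∀ i, B i = (A i)ᶜ := by
  classical
  set C : Fin m → ℕ := fun i => (((A i).card + (B i).card).choose (A i).card) with hC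
  have hCpos : ∀ i, 0 < C i := fun i => Nat.choose_pos (Nat.le_add_right _ _)
  set Comp : Fin m → Finset (Equiv.Perm (Fin n)) :=
    fun i => Finset.univ.filter (fun σ => Gset (A i) (B i) σ = A i) with hComp
  set χ : Fin m → Equiv.Perm (Fin n) → ℕ :=
    fun i σ => if Gset (A i) (B i) σ = A i then 1 else 0 with hχ
  have hN3 : ∀ i σ, χ i σ ≤ (Tset n (A i) (B i) σ).card := by
    intro i σ
    by_cases h : Gset (A i) (B i) σ = A i
    · rw [hχ]
      simp only [if_pos h]
      exact Finset.Nonempty.card_pos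
        (Tset_nonempty _ _ _ (G_eq_imp_compat _ _ _ (hdisj i) h))
    · rw [hχ]
      simp [if_neg h]
  have hcompχ : ∀ i, (Comp i).card = ∑ σ : Equiv.Perm (Fin n), χ i σ := by
    intro i
    rw [hComp, hχ]
    exact Finset.card_filter _ _
  -- the chain of inequalities in ℚ
  have hq1 : ((n.factorial * (n + 1) : ℕ) : ℚ) ≤ ∑ i, ((Comp i).card : ℚ) := by
    have hper : ∀ i, (n.factorial : ℚ) / (C i) ≤ ((Comp i).card : ℚ) := by
      intro i
      rw [div_le_iff₀ (by exact_mod_cast hCpos i)]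
      exact_mod_cast count_le (A i) (B i) (hdisj i)
    calc ((n.factorial * (n + 1) : ℕ) : ℚ)
        = (n.factorial : ℚ) * ((n : ℚ) + 1) := by push_cast; ring
      _ = (n.factorial : ℚ) * ∑ i, (1 : ℚ) / (C i) := by rw [heq]
      _ = ∑ i, (n.factorial : ℚ) / (C i) := by
          rw [Finset.mul_sum]
          apply Finset.sum_congr rfl
          intro i _
          ring
      _ ≤ ∑ i, ((Comp i).card : ℚ) := Finset.sum_le_sum (fun i _ => hper i)
  have hq4 : (∑ σ : Equiv.Perm (Fin n), ∑ i, (Tset n (A i) (B i) σ).card)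
      ≤ n.factorial * (n + 1) := by
    calc ∑ σ : Equiv.Perm (Fin n), ∑ i, (Tset n (A i) (B i) σ).card
        ≤ ∑ _σ : Equiv.Perm (Fin n), (n + 1) :=
          Finset.sum_le_sum (fun σ _ => Tset_sum_le m A B hskew σ)
      _ = n.factorial * (n + 1) := by
          rw [Finset.sum_const, smul_eq_mul, Finset.card_univ, Fintype.card_perm,
            Fintype.card_fin]
  have hXY : (∑ σ : Equiv.Perm (Fin n), ∑ i, χ i σ)
      = ∑ σ : Equiv.Perm (Fin n), ∑ i, (Tset n (A i) (B i) σ).card := by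
    have hle1 : (∑ σ : Equiv.Perm (Fin n), ∑ i, χ i σ)
        ≤ ∑ σ : Equiv.Perm (Fin n), ∑ i, (Tset n (A i) (B i) σ).card :=
      Finset.sum_le_sum (fun σ _ => Finset.sum_le_sum (fun i _ => hN3 i σ))
    have hge : (n.factorial * (n + 1) : ℕ) ≤ ∑ σ : Equiv.Perm (Fin n), ∑ i, χ i σ := by
      have hswap : (∑ σ : Equiv.Perm (Fin n), ∑ i, χ i σ) = ∑ i, (Comp i).card := by
        rw [Finset.sum_comm]
        exact Finset.sum_congr rfl (fun i _ => (hcompχ i).symm)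
      rw [hswap]
      have : ((n.factorial * (n + 1) : ℕ) : ℚ) ≤ ((∑ i, (Comp i).card : ℕ) : ℚ) := by
        push_cast
        exact_mod_cast hq1
      exact_mod_cast this
    omega
  have hpt : ∀ σ : Equiv.Perm (Fin n), ∀ i, χ i σ = (Tset n (A i) (B i) σ).card := by
    have h1 := (Finset.sum_eq_sum_iff_of_le
      (fun σ _ => Finset.sum_le_sum (fun i _ => hN3 i σ))).mp hXY
    intro σ i
    have h2 := (Finset.sum_eq_sum_iff_of_le (fun i _ => hN3 i σ)).mp
      (h1 σ (Finset.mem_univ σ))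
    exact h2 i (Finset.mem_univ i)
  have hT1 : ∀ i (σ : Equiv.Perm (Fin n)), (Tset n (A i) (B i) σ).card ≤ 1 := by
    intro i σ
    rw [← hpt σ i]
    by_cases h : Gset (A i) (B i) σ = A i <;> simp [hχ, h]
  intro i
  by_contra hne
  have hz : ∃ z, z ∉ A i ∧ z ∉ B i := by
    by_contra h
    push_neg at h
    apply hne
    ext z
    simp only [Finset.mem_compl]
    constructor
    · intro hz
      exact Finset.disjoint_right.mp (hdisj i) hz
    · intro hz
      exact h z hz
  obtain ⟨z, hzA, hzB⟩ := hz
  obtain ⟨σ, hσ⟩ := exists_perm_two (A i) (B i) (hdisj i) z hzA hzB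
  have := hT1 i σ
  omega
end

section
/- Let a, b, t be non-negative integers and let {(A_i, B_i)}_{1≤i≤m} be a skew Bollobás t-system with |A_i| = a + t and |B_i| = b + t for all i. Then m ≤ C(a+b, a). -/
open Submodule Module

section Escape
variable {K E : Type*} [Field K] [Infinite K] [AddCommGroup E] [Module K E]

lemma escape_union {ι : Type*} [Finite ι] (p : ι → Submodule K E) (h : ∀ i, p i ≠ ⊤) :
    ∃ x : E, ∀ i, x ∉ p i := by
  by_contra hc
  push_neg at hc
  have hcov : ⋃ i, ((p i : Set E)) = Set.univ := by
    ext x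
    simp only [Set.mem_iUnion, Set.mem_univ, iff_true, SetLike.mem_coe]
    exact hc x
  obtain ⟨i, hi⟩ := Subspace.exists_eq_top_of_iUnion_eq_univ hcov
  exact h i hi

lemma exists_avoiding_subspace [FiniteDimensional K E] {ι : Type*} [Finite ι]
    (D : ι → Submodule K E) (t : ℕ) (hD : ∀ i, finrank K (D i) ≤ t) (k : ℕ)
    (hk : k + t ≤ finrank K E) :
    ∃ G : Submodule K E, finrank K G = k ∧ ∀ i, G ⊓ D i = ⊥ := by
  induction k with
  | zero => exact ⟨⊥, finrank_bot _ _, fun i => bot_inf_eq _⟩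
  | succ k ih =>
    obtain ⟨G, hG, hGD⟩ := ih (by omega)
    set q : Option ι → Submodule K E := fun o => o.elim G (fun i => G ⊔ D i) with hq
    have hprop : ∀ o, q o ≠ ⊤ := by
      rintro (_ | i) htop
      · simp only [hq, Option.elim] at htop
        rw [htop, finrank_top] at hG
        have := finrank_le G
        omega
      · simp only [hq, Option.elim] at htop
        have h1 : finrank K ↥(G ⊔ D i) ≤ k + t := by
          have := Submodule.finrank_sup_add_finrank_inf_eq G (D i)
          have := hD i
          omega
        rw [htop, finrank_top] at h1
        omega
    haveI := Fintype.ofFinite ι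
    haveI : Finite (Option ι) := Finite.of_fintype _
    obtain ⟨x, hx⟩ := escape_union q hprop
    have hxG : x ∉ G := hx none
    have hx0 : x ≠ 0 := fun h => hxG (h ▸ zero_mem G)
    refine ⟨G ⊔ K ∙ x, ?_, ?_⟩
    · have hdisj : G ⊓ (K ∙ x) = ⊥ := by
        rw [eq_bot_iff]
        intro v ⟨hv1, hv2⟩
        obtain ⟨c, rfl⟩ := mem_span_singleton.mp hv2
        rcases eq_or_ne c 0 with rfl | hc
        · simp
        · exact absurd (smul_mem _ c⁻¹ hv1) (by simpa [smul_smul, inv_mul_cancel₀ hc] using hxG)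
      have := Submodule.finrank_sup_add_finrank_inf_eq G (K ∙ x)
      rw [hdisj, finrank_bot, finrank_span_singleton hx0] at this
      omega
    · intro i
      rw [eq_bot_iff]
      rintro v ⟨hv1, hv2⟩
      obtain ⟨g, hg, s, hs, rfl⟩ := mem_sup.mp hv1
      obtain ⟨c, rfl⟩ := mem_span_singleton.mp hs
      rcases eq_or_ne c 0 with rfl | hc
      · rw [zero_smul, add_zero] at hv2 ⊢
        have : g ∈ G ⊓ D i := ⟨hg, hv2⟩
        rw [hGD i] at this
        exact this
      · exfalso
        apply hx (some i)
        have : c • x = (g + c • x) - g := by abel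
        have hmem : c • x ∈ G ⊔ D i := by
          rw [this]
          exact sub_mem (mem_sup_right hv2) (mem_sup_left hg)
        have := smul_mem (G ⊔ D i) c⁻¹ hmem
        rwa [smul_smul, inv_mul_cancel₀ hc, one_smul] at this

end Escape

section Moment

lemma moment_li (n D : ℕ) (S : Finset (Fin n)) (hS : S.card ≤ D) :
    LinearIndependent ℚ (fun (s : {x // x ∈ S}) (j : Fin D) => ((s : Fin n) : ℚ) ^ (j : ℕ)) := by
  set c := S.card with hc
  set α : Fin c → ℚ := fun i => ((S.orderIsoOfFin hc.symm i : Fin n) : ℚ) with hα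
  have hinj : Function.Injective α := by
    intro i j hij
    have h1 : ((S.orderIsoOfFin hc.symm i : Fin n) : ℚ) = ((S.orderIsoOfFin hc.symm j : Fin n) : ℚ) := hij
    have h2 : (S.orderIsoOfFin hc.symm i : Fin n) = (S.orderIsoOfFin hc.symm j : Fin n) := by
      apply Fin.val_injective
      exact_mod_cast h1
    have h3 : S.orderIsoOfFin hc.symm i = S.orderIsoOfFin hc.symm j := Subtype.ext h2
    exact (S.orderIsoOfFin hc.symm).injective h3
  have hdet : (Matrix.vandermonde α).det ≠ 0 := Matrix.det_vandermonde_ne_zero_iff.mpr hinj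
  have hrows : LinearIndependent ℚ (fun i => Matrix.vandermonde α i) :=
    Matrix.linearIndependent_rows_iff_isUnit.mpr
      ((Matrix.isUnit_iff_isUnit_det _).mpr (isUnit_iff_ne_zero.mpr hdet))
  apply LinearIndependent.of_comp (LinearMap.funLeft ℚ ℚ (Fin.castLE hS))
  set he := (S.orderIsoOfFin hc.symm).toEquiv with hhe
  have h2 : LinearIndependent ℚ (fun s : {x // x ∈ S} => Matrix.vandermonde α (he.symm s)) :=
    hrows.comp he.symm he.symm.injective
  convert h2 using 1
  funext s j
  simp only [Function.comp_apply, LinearMap.funLeft_apply, Matrix.vandermonde_apply, hα]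
  have : (he (he.symm s) : Fin n) = (s : Fin n) := by rw [Equiv.apply_symm_apply]
  rw [show (S.orderIsoOfFin hc.symm (he.symm s) : Fin n) = (he (he.symm s) : Fin n) from rfl, this]
  rfl

end Moment

section SpanFacts

variable {n D : ℕ} (v : Fin n → (Fin D → ℚ))
  (GP : ∀ S : Finset (Fin n), S.card ≤ D →
    LinearIndependent ℚ (fun s : {x // x ∈ S} => v s))

include GP in
lemma span_finrank_eq (S : Finset (Fin n)) (hS : S.card ≤ D) :
    finrank ℚ (span ℚ (v '' S)) = S.card := by
  have h1 := GP S hS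
  have h2 := finrank_span_eq_card h1
  have h3 : Set.range (fun s : {x // x ∈ S} => v s) = v '' S := by
    rw [show (fun s : {x // x ∈ S} => v s) = v ∘ (fun s : {x // x ∈ S} => (s : Fin n)) from rfl,
      Set.range_comp, Subtype.range_coe_subtype]
    rfl
  rw [h3] at h2
  rw [h2, Fintype.card_coe]

include GP in
lemma span_top_of_card_ge (S : Finset (Fin n)) (hS : D ≤ S.card) :
    span ℚ (v '' S) = ⊤ := by
  obtain ⟨T, hTS, hT⟩ := Finset.exists_subset_card_eq hS
  have h1 : finrank ℚ (span ℚ (v '' T)) = D := by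
    rw [span_finrank_eq v GP T hT.le, hT]
  have h2 : span ℚ (v '' T) = ⊤ := by
    apply Submodule.eq_top_of_finrank_eq
    rw [h1, Module.finrank_fin_fun]
  have h3 : span ℚ (v '' T) ≤ span ℚ (v '' S) :=
    span_mono (Set.image_mono (f := v) (by exact_mod_cast hTS))
  rw [h2] at h3
  exact top_le_iff.mp h3

end SpanFacts

section Wedge
variable {M : Type*} [AddCommGroup M] [Module ℚ M]

lemma iMulti_mul (a b : ℕ) (p : Fin a → M) (q : Fin b → M) :
    ExteriorAlgebra.ιMulti ℚ (a + b) (fun k => Sum.elim p q (finSumFinEquiv.symm k)) =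
      ExteriorAlgebra.ιMulti ℚ a p * ExteriorAlgebra.ιMulti ℚ b q := by
  rw [ExteriorAlgebra.ιMulti_apply, ExteriorAlgebra.ιMulti_apply, ExteriorAlgebra.ιMulti_apply,
    List.ofFn_add, List.prod_append]
  congr 1
  · refine congrArg List.prod (List.ofFn_inj.mpr ?_)
    funext k
    exact congrArg (fun x => ExteriorAlgebra.ι ℚ (Sum.elim p q x)) (finSumFinEquiv_symm_apply_castAdd k)
  · refine congrArg List.prod (List.ofFn_inj.mpr ?_)
    funext k
    simp [finSumFinEquiv_symm_apply_natAdd]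

end Wedge

section WedgeBound

lemma wedge_bound {M : Type} [AddCommGroup M] [Module ℚ M] [FiniteDimensional ℚ M]
    (a b m : ℕ) (hM : finrank ℚ M = a + b)
    (p : Fin m → Fin a → M) (q : Fin m → Fin b → M)
    (hdiagLI : ∀ i, LinearIndependent ℚ (Sum.elim (p i) (q i)))
    (hmixdep : ∀ i j, i < j → ¬ LinearIndependent ℚ (Sum.elim (p i) (q j))) :
    m ≤ (a + b).choose a := by
  classical
  haveI : Module.Free ℚ M := Module.Free.of_divisionRing ℚ M
  let e : Basis (Fin (a + b)) ℚ M := Module.finBasisOfFinrankEq ℚ M hM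
  let lift : ExteriorAlgebra ℚ M →ₗ[ℚ] ℚ :=
    ExteriorAlgebra.liftAlternating (Pi.single (a + b) e.det)
  let u : Fin m → ExteriorAlgebra ℚ M := fun i => ExteriorAlgebra.ιMulti ℚ a (p i)
  let w : Fin m → ExteriorAlgebra ℚ M := fun j => ExteriorAlgebra.ιMulti ℚ b (q j)
  have hlift : ∀ (f : Fin (a + b) → M),
      lift (ExteriorAlgebra.ιMulti ℚ (a + b) f) = e.det f := by
    intro f
    rw [show lift = ExteriorAlgebra.liftAlternating (Pi.single (a + b) e.det) from rfl,
      ExteriorAlgebra.liftAlternating_apply_ιMulti, Pi.single_eq_same]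
  have hmul : ∀ i j, u i * w j =
      ExteriorAlgebra.ιMulti ℚ (a + b)
        (fun k => Sum.elim (p i) (q j) (finSumFinEquiv.symm k)) := by
    intro i j
    rw [← iMulti_mul]
  have hdiagval : ∀ i, lift (u i * w i) ≠ 0 := by
    intro i
    rw [hmul, hlift]
    have hLI : LinearIndependent ℚ
        (fun k => Sum.elim (p i) (q i) (finSumFinEquiv.symm k)) :=
      (hdiagLI i).comp finSumFinEquiv.symm (Equiv.injective _)
    have hspan : span ℚ (Set.range
        (fun k => Sum.elim (p i) (q i) (finSumFinEquiv.symm k))) = ⊤ := by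
      apply Submodule.eq_top_of_finrank_eq
      rw [finrank_span_eq_card hLI, Fintype.card_fin, hM]
    exact ((Basis.is_basis_iff_det e).mp ⟨hLI, hspan⟩).ne_zero
  have hoffval : ∀ i j, i < j → lift (u i * w j) = 0 := by
    intro i j hij
    rw [hmul, hlift]
    apply AlternatingMap.map_linearDependent
    intro hLI
    apply hmixdep i j hij
    have h1 := hLI.comp finSumFinEquiv (Equiv.injective _)
    have h2 : (fun k => Sum.elim (p i) (q j) (finSumFinEquiv.symm k)) ∘ finSumFinEquiv
        = Sum.elim (p i) (q j) := by
      funext x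
      simp
    rwa [h2] at h1
  let X := {S : Finset (Fin (a + b)) // S.card = b}
  let F : Fin m → (X → ℚ) := fun i Sp =>
    lift (u i * ExteriorAlgebra.ιMulti ℚ b (fun k => e ((Sp.1.orderIsoOfFin Sp.2) k)))
  have hFLI : LinearIndependent ℚ F := by
    rw [Fintype.linearIndependent_iff]
    intro g hg
    by_contra hcon
    push_neg at hcon
    obtain ⟨i0, hi0⟩ := hcon
    set s : Finset (Fin m) := Finset.univ.filter (fun i => g i ≠ 0) with hs
    have hsne : s.Nonempty := ⟨i0, by simp [hs, hi0]⟩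
    set j := s.max' hsne with hj
    have hgj : g j ≠ 0 := by
      have h1 := Finset.mem_filter.mp (s.max'_mem hsne)
      exact h1.2
    have hmax : ∀ i, j < i → g i = 0 := by
      intro i hji
      by_contra hne
      exact absurd (s.le_max' i (by simp [hs, hne])) (not_le.mpr hji)
    let Ψ : ExteriorAlgebra ℚ M →ₗ[ℚ] ℚ :=
      ∑ i, g i • (lift ∘ₗ LinearMap.mulLeft ℚ (u i))
    have hΨ : ∀ y, Ψ y = ∑ i, g i * lift (u i * y) := by
      intro y
      simp only [Ψ, LinearMap.sum_apply, LinearMap.smul_apply, LinearMap.comp_apply,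
        LinearMap.mulLeft_apply, smul_eq_mul]
    let Φ := Ψ.compAlternatingMap (ExteriorAlgebra.ιMulti ℚ b)
    have hΦapp : ∀ f : Fin b → M, Φ f = Ψ (ExteriorAlgebra.ιMulti ℚ b f) := fun f => rfl
    have hΦ0 : Φ = 0 := by
      apply Basis.ext_alternating e
      intro wf hwinj
      set S : Finset (Fin (a + b)) := Finset.univ.image wf with hSdef
      have hScard : S.card = b := by
        rw [hSdef, Finset.card_image_of_injective _ hwinj, Finset.card_univ, Fintype.card_fin]
      have hmem : ∀ k, wf k ∈ S := fun k => Finset.mem_image_of_mem _ (Finset.mem_univ k)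
      set τ : Fin b → Fin b := fun k => (S.orderIsoOfFin hScard).symm ⟨wf k, hmem k⟩ with hτ
      have hτinj : Function.Injective τ := by
        intro x y hxy
        have h1 := (S.orderIsoOfFin hScard).symm.injective hxy
        exact hwinj (congrArg Subtype.val h1)
      set σ : Equiv.Perm (Fin b) := Equiv.ofBijective τ
        (Finite.injective_iff_bijective.mp hτinj) with hσ
      have hcomp : (fun k => e (wf k)) =
          (fun k => e ((S.orderIsoOfFin hScard) k)) ∘ σ := by
        funext k
        have h1 : (S.orderIsoOfFin hScard) (σ k) = ⟨wf k, hmem k⟩ := by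
          rw [hσ, Equiv.ofBijective_apply, hτ, OrderIso.apply_symm_apply]
        simp only [Function.comp_apply, h1]
      have hval : Φ (fun k => e ((S.orderIsoOfFin hScard) k)) = 0 := by
        have h1 := congrFun hg ⟨S, hScard⟩
        rw [hΦapp, hΨ]
        have h3 : ∀ i, g i * lift (u i * ExteriorAlgebra.ιMulti ℚ b
            (fun k => e ((S.orderIsoOfFin hScard) k))) = g i * F i ⟨S, hScard⟩ := fun i => rfl
        rw [Finset.sum_congr rfl (fun i _ => h3 i)]
        simpa using h1
      show Φ (fun k => e (wf k)) = (0 : M [⋀^Fin b]→ₗ[ℚ] ℚ) (fun k => e (wf k))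
      rw [hcomp, AlternatingMap.map_perm, hval, smul_zero, AlternatingMap.zero_apply]
    have h2 : Ψ (w j) = 0 := by
      have h1 : Φ (q j) = 0 := by rw [hΦ0]; exact AlternatingMap.zero_apply _
      rw [hΦapp] at h1
      exact h1
    rw [hΨ] at h2
    have hterm : ∀ i ∈ Finset.univ, g i * lift (u i * w j)
        = if i = j then g j * lift (u j * w j) else 0 := by
      intro i _
      rcases lt_trichotomy i j with h | h | h
      · rw [hoffval i j h, mul_zero, if_neg (ne_of_lt h)]
      · subst h; rw [if_pos rfl]
      · rw [hmax i h, zero_mul, if_neg (ne_of_gt h)]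
    rw [Finset.sum_congr rfl hterm, Finset.sum_ite_eq' Finset.univ j
      (fun _ => g j * lift (u j * w j))] at h2
    rw [if_pos (Finset.mem_univ j)] at h2
    rcases mul_eq_zero.mp h2 with h | h
    · exact hgj h
    · exact hdiagval j h
  have hle := hFLI.fintype_card_le_finrank
  rw [Fintype.card_fin, Module.finrank_fintype_fun_eq_card] at hle
  have hcardX : Fintype.card X = (a + b).choose b := by
    rw [show Fintype.card X = Fintype.card {S : Finset (Fin (a + b)) // S.card = b} from rfl,
      Fintype.card_finset_len, Fintype.card_fin]
  have hsymm : (a + b).choose b = (a + b).choose a := by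
    have h := Nat.choose_symm (Nat.le_add_right a b)
    rwa [show a + b - a = b by omega] at h
  rw [hcardX, hsymm] at hle
  exact hle

end WedgeBound

lemma inner_bound {W : Type} [AddCommGroup W] [Module ℚ W] [FiniteDimensional ℚ W]
    (a b t m : ℕ) (hW : finrank ℚ W = a + b + t)
    (U V : Fin m → Submodule ℚ W)
    (hUfin : ∀ i, finrank ℚ ↥(U i) = a + t) (hVfin : ∀ i, finrank ℚ ↥(V i) = b + t)
    (hUVtop : ∀ i, U i ⊔ V i = ⊤)
    (hUVlow : ∀ i j, i < j → t + 1 ≤ finrank ℚ ↥(U i ⊓ V j)) :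
    m ≤ (a + b).choose a := by
  classical
  have hdiag : ∀ i, finrank ℚ ↥(U i ⊓ V i) ≤ t := by
    intro i
    have h1 := Submodule.finrank_sup_add_finrank_inf_eq (U i) (V i)
    rw [hUVtop i, finrank_top, hW, hUfin i, hVfin i] at h1
    omega
  obtain ⟨G, hGrank, hGdisj⟩ := exists_avoiding_subspace (fun i => U i ⊓ V i) t hdiag (a + b)
    (by rw [hW])
  haveI : FiniteDimensional ℚ ↥G := inferInstance
  have hcom : ∀ (X : Submodule ℚ W),
      finrank ℚ ↥(Submodule.comap G.subtype X) = finrank ℚ ↥(G ⊓ X) := by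
    intro X
    have h := Submodule.finrank_map_subtype_eq G (Submodule.comap G.subtype X)
    rw [Submodule.map_comap_subtype] at h
    exact h.symm
  have hdim3 : ∀ (X : Submodule ℚ W),
      finrank ℚ ↥X + (a + b) ≤ (a + b + t) + finrank ℚ ↥(Submodule.comap G.subtype X) := by
    intro X
    have h1 := Submodule.finrank_sup_add_finrank_inf_eq G X
    have h2 : finrank ℚ ↥(G ⊔ X) ≤ a + b + t := le_trans (Submodule.finrank_le _) (le_of_eq hW)
    rw [hcom X]
    omega
  have hUt_ge : ∀ i, a ≤ finrank ℚ ↥(Submodule.comap G.subtype (U i)) := fun i => by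
    have h1 := hdim3 (U i); rw [hUfin i] at h1; omega
  have hVt_ge : ∀ i, b ≤ finrank ℚ ↥(Submodule.comap G.subtype (V i)) := fun i => by
    have h1 := hdim3 (V i); rw [hVfin i] at h1; omega
  have hdisjt : ∀ i, Submodule.comap G.subtype (U i) ⊓ Submodule.comap G.subtype (V i) = ⊥ := by
    intro i
    rw [← Submodule.comap_inf, eq_bot_iff]
    intro x hx
    have hmem : (x : W) ∈ G ⊓ (U i ⊓ V i) := ⟨x.2, hx⟩
    rw [hGdisj i] at hmem
    rw [Submodule.mem_bot] at hmem ⊢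
    exact Subtype.ext hmem
  have hUVt_eq : ∀ i, finrank ℚ ↥(Submodule.comap G.subtype (U i)) = a ∧
      finrank ℚ ↥(Submodule.comap G.subtype (V i)) = b := by
    intro i
    have hd : Disjoint (Submodule.comap G.subtype (U i)) (Submodule.comap G.subtype (V i)) :=
      disjoint_iff.mpr (hdisjt i)
    have h0 := Submodule.finrank_add_finrank_le_of_disjoint hd
    rw [hGrank] at h0
    have h1 := hUt_ge i
    have h2 := hVt_ge i
    omega
  have hmix : ∀ i j, i < j →
      Submodule.comap G.subtype (U i) ⊓ Submodule.comap G.subtype (V j) ≠ ⊥ := by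
    intro i j hij
    have hXge := hUVlow i j hij
    have h3 := hdim3 (U i ⊓ V j)
    have h4 : 1 ≤ finrank ℚ ↥(Submodule.comap G.subtype (U i ⊓ V j)) := by omega
    intro hbot
    rw [Submodule.comap_inf, hbot, finrank_bot] at h4
    omega
  have hbases : ∀ i, ∃ p : Fin a → ↥G, LinearIndependent ℚ p ∧
      span ℚ (Set.range p) = Submodule.comap G.subtype (U i) := by
    intro i
    have hb := Module.finBasisOfFinrankEq ℚ ↥(Submodule.comap G.subtype (U i)) (hUVt_eq i).1
    refine ⟨fun k => ((hb k : ↥(Submodule.comap G.subtype (U i))) : ↥G), ?_, ?_⟩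
    · exact hb.linearIndependent.map' (Submodule.comap G.subtype (U i)).subtype
        (Submodule.ker_subtype _)
    · rw [show (fun k => ((hb k : ↥(Submodule.comap G.subtype (U i))) : ↥G))
          = (Submodule.comap G.subtype (U i)).subtype ∘ hb from rfl,
        Set.range_comp, Submodule.span_image, hb.span_eq, Submodule.map_top,
        Submodule.range_subtype]
  have hbases' : ∀ i, ∃ q : Fin b → ↥G, LinearIndependent ℚ q ∧
      span ℚ (Set.range q) = Submodule.comap G.subtype (V i) := by
    intro i
    have hb := Module.finBasisOfFinrankEq ℚ ↥(Submodule.comap G.subtype (V i)) (hUVt_eq i).2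
    refine ⟨fun k => ((hb k : ↥(Submodule.comap G.subtype (V i))) : ↥G), ?_, ?_⟩
    · exact hb.linearIndependent.map' (Submodule.comap G.subtype (V i)).subtype
        (Submodule.ker_subtype _)
    · rw [show (fun k => ((hb k : ↥(Submodule.comap G.subtype (V i))) : ↥G))
          = (Submodule.comap G.subtype (V i)).subtype ∘ hb from rfl,
        Set.range_comp, Submodule.span_image, hb.span_eq, Submodule.map_top,
        Submodule.range_subtype]
  choose p hpLI hpspan using hbases
  choose q hqLI hqspan using hbases'
  have hdiagLI : ∀ i, LinearIndependent ℚ (Sum.elim (p i) (q i)) := by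
    intro i
    apply (hpLI i).sum_type (hqLI i)
    rw [hpspan i, hqspan i]
    exact disjoint_iff.mpr (hdisjt i)
  have hmixdep : ∀ i j, i < j → ¬ LinearIndependent ℚ (Sum.elim (p i) (q j)) := by
    intro i j hij hLI
    obtain ⟨-, -, hdisj⟩ := linearIndependent_sum.mp hLI
    rw [Sum.elim_comp_inl, Sum.elim_comp_inr, hpspan i, hqspan j] at hdisj
    exact hmix i j hij (disjoint_iff.mp hdisj)
  exact wedge_bound a b m hGrank p q hdiagLI hmixdep

theorem furedi_skew_t_system (n m a b t : ℕ) (A B : Fin m → Finset (Fin n))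
    (hA : ∀ i, (A i).card = a + t) (hB : ∀ i, (B i).card = b + t)
    (hself : ∀ i, (A i ∩ B i).card ≤ t)
    (hskew : ∀ i j, i < j → t < (A i ∩ B j).card) :
    m ≤ (a + b).choose a := by
  classical
  have GP : ∀ S : Finset (Fin n), S.card ≤ a + b + t →
      LinearIndependent ℚ (fun s : {x // x ∈ S} =>
        (fun (x : Fin n) (j : Fin (a + b + t)) => ((x : ℕ) : ℚ) ^ (j : ℕ)) s) :=
    fun S hS => moment_li n (a + b + t) S hS
  set v : Fin n → (Fin (a + b + t) → ℚ) := fun x j => ((x : ℕ) : ℚ) ^ (j : ℕ) with hv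
  have hW : finrank ℚ (Fin (a + b + t) → ℚ) = a + b + t := Module.finrank_fin_fun ℚ
  apply inner_bound a b t m hW (fun i => span ℚ (v '' A i)) (fun i => span ℚ (v '' B i))
  · intro i
    rw [span_finrank_eq v GP _ (by rw [hA i]; omega), hA i]
  · intro i
    rw [span_finrank_eq v GP _ (by rw [hB i]; omega), hB i]
  · intro i
    rw [← Submodule.span_union, ← Set.image_union, ← Finset.coe_union]
    apply span_top_of_card_ge v GP
    have h1 := Finset.card_union_add_card_inter (A i) (B i)
    have h2 := hself i
    rw [hA i, hB i] at h1
    omega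
  · intro i j hij
    have hsub : span ℚ (v '' ↑(A i ∩ B j)) ≤
        span ℚ (v '' A i) ⊓ span ℚ (v '' B j) := by
      apply le_inf
      · exact span_mono (Set.image_mono (f := v) (by exact_mod_cast
          (Finset.inter_subset_left : A i ∩ B j ⊆ A i)))
      · exact span_mono (Set.image_mono (f := v) (by exact_mod_cast
          (Finset.inter_subset_right : A i ∩ B j ⊆ B j)))
    have hcard : (A i ∩ B j).card ≤ a + b + t := by
      have h5 : A i ∩ B j ⊆ A i := Finset.inter_subset_left
      have h6 := Finset.card_le_card h5
      rw [hA i] at h6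
      omega
    have h2 := span_finrank_eq v GP (A i ∩ B j) hcard
    have h3 := Submodule.finrank_mono hsub
    have h4 := hskew i j hij
    omega
end

section
/- Let t ≤ n, let A_1, ..., A_{2^{n-t}} be an enumeration of all subsets of [n] containing [t], ordered so that |A_i| ≥ |A_j| for i < j, and set B_i := [t] ∪ ([n] \ A_i). Then {(A_i, B_i)}_{1≤i≤2^{n-t}} is a skew Bollobás t-system: |A_i ∩ B_i| ≤ t for all i and |A_i ∩ B_j| > t for all i < j. -/
theorem skew_t_system_construction (n t : ℕ) (ht : t ≤ n)
    (A : Fin (2 ^ (n - t)) → Finset ℕ)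
    (hsub : ∀ i, Finset.range t ⊆ A i ∧ A i ⊆ Finset.range n)
    (hall : ∀ S : Finset ℕ, Finset.range t ⊆ S → S ⊆ Finset.range n → ∃ i, A i = S)
    (hmono : ∀ i j : Fin (2 ^ (n - t)), i < j → (A j).card ≤ (A i).card)
    (B : Fin (2 ^ (n - t)) → Finset ℕ)
    (hB : ∀ i, B i = Finset.range t ∪ (Finset.range n \ A i)) :
    (∀ i, (A i ∩ B i).card ≤ t) ∧ (∀ i j, i < j → t < (A i ∩ B j).card) := by
  -- the family of all admissible sets
  set F : Finset (Finset ℕ) :=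
    (Finset.range n \ Finset.range t).powerset.image (fun S => Finset.range t ∪ S) with hF
  have hcardF : F.card = 2 ^ (n - t) := by
    rw [hF, Finset.card_image_of_injOn, Finset.card_powerset, Finset.card_sdiff_of_subset
      (Finset.range_subset_range.2 ht), Finset.card_range, Finset.card_range]
    intro S1 h1 S2 h2 h
    simp only [Finset.mem_coe, Finset.mem_powerset] at h1 h2
    have key : ∀ S : Finset ℕ, S ⊆ Finset.range n \ Finset.range t →
        (Finset.range t ∪ S) \ Finset.range t = S := by
      intro S hS
      apply Finset.Subset.antisymm
      · intro x hx
        simp only [Finset.mem_sdiff, Finset.mem_union] at hx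
        tauto
      · intro x hx
        have := hS hx
        simp only [Finset.mem_sdiff] at this ⊢
        exact ⟨Finset.mem_union_right _ hx, this.2⟩
    have h' := congrArg (fun T => T \ Finset.range t) h
    simpa [key S1 h1, key S2 h2] using h'
  have hmemF : ∀ i, A i ∈ F := by
    intro i
    rw [hF]
    refine Finset.mem_image.2 ⟨A i \ Finset.range t, ?_, ?_⟩
    · exact Finset.mem_powerset.2 (Finset.sdiff_subset_sdiff (hsub i).2 le_rfl)
    · rw [Finset.union_sdiff_of_subset (hsub i).1]
  -- A is injective
  have hinj : Function.Injective A := by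
    have hsurj : ∀ b ∈ F, ∃ a ∈ (Finset.univ : Finset (Fin (2 ^ (n - t)))), A a = b := by
      intro b hb
      rw [hF] at hb
      obtain ⟨S, hS, rfl⟩ := Finset.mem_image.1 hb
      rw [Finset.mem_powerset] at hS
      obtain ⟨i, hi⟩ := hall (Finset.range t ∪ S) Finset.subset_union_left
        (Finset.union_subset (Finset.range_subset_range.2 ht)
          (hS.trans Finset.sdiff_subset))
      exact ⟨i, Finset.mem_univ i, hi⟩
    have hle : (Finset.univ : Finset (Fin (2 ^ (n - t)))).card ≤ F.card := by
      simp [hcardF]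
    have := Finset.inj_on_of_surj_on_of_card_le (s := Finset.univ) (t := F)
      (fun a _ => A a) (fun a _ => hmemF a)
      (fun b hb => by obtain ⟨a, _, h⟩ := hsurj b hb; exact ⟨a, Finset.mem_univ a, h⟩) hle
    intro i j h
    exact this (Finset.mem_univ i) (Finset.mem_univ j) h
  constructor
  · intro i
    have hsubt : A i ∩ B i ⊆ Finset.range t := by
      intro x hx
      rw [hB i] at hx
      simp only [Finset.mem_inter, Finset.mem_union, Finset.mem_sdiff] at hx
      tauto
    calc (A i ∩ B i).card ≤ (Finset.range t).card := Finset.card_le_card hsubt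
      _ = t := Finset.card_range t
  · intro i j hij
    have hne : A i ≠ A j := fun h => absurd (hinj h) (Fin.ne_of_lt hij)
    have hdiff : (A i \ A j).Nonempty := by
      rw [Finset.sdiff_nonempty]
      intro hsub'
      exact hne (Finset.eq_of_subset_of_card_le hsub' (hmono i j hij))
    obtain ⟨x, hx⟩ := hdiff
    rw [Finset.mem_sdiff] at hx
    have hxn : x ∈ Finset.range n := (hsub i).2 hx.1
    have hxt : x ∉ Finset.range t := fun h => hx.2 ((hsub j).1 h)
    have hsubAB : insert x (Finset.range t) ⊆ A i ∩ B j := by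
      intro y hy
      rw [Finset.mem_insert] at hy
      rw [hB j, Finset.mem_inter, Finset.mem_union, Finset.mem_sdiff]
      rcases hy with rfl | hy
      · exact ⟨hx.1, Or.inr ⟨hxn, hx.2⟩⟩
      · exact ⟨(hsub i).1 hy, Or.inl hy⟩
    calc t < t + 1 := Nat.lt_succ_self t
      _ = (insert x (Finset.range t)).card := by
          rw [Finset.card_insert_of_notMem hxt, Finset.card_range]
      _ ≤ (A i ∩ B j).card := Finset.card_le_card hsubAB
end

section
/- Let F be a field and U_1,...,U_m, V_1,...,V_m subspaces of an n-dimensional vector space W over F such that U_i ∩ V_i = {0} for all 1 ≤ i ≤ m and U_i ∩ V_j ≠ {0} for all 1 ≤ i < j ≤ m. Then m ≤ 2^n. -/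
/-!
Lovász's exterior-algebra argument. Enlarging each `V i` to a complement `V' i` of `U i` keeps
both conditions. Fix `d` and look at the indices with `dim U i = d`. The wedge `u i ∈ ⋀^d W` of
a basis of `U i`, followed by the wedge with a basis of `V' j`, lands in `⋀^n W ≅ F` and is
nonzero exactly when `U i ∩ V' j = 0`. These pairings form a triangular matrix with nonzero
diagonal, so the `u i` are linearly independent and there are at most `choose n d` of them.
Summing over `d` gives `2 ^ n`.
-/

open Module

theorem linearIndependent_of_triangular_pairing {R M ι : Type*} [CommRing R] [IsDomain R]
    [AddCommGroup M] [Module R M] [Fintype ι] [LinearOrder ι] (u : ι → M) (ψ : ι → Dual R M)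
    (hdiag : ∀ i, ψ i (u i) ≠ 0) (hlower : ∀ i j, i < j → ψ j (u i) = 0) :
    LinearIndependent R u := by
  classical
  let A : Matrix ι ι R := .of fun i j => ψ j (u i)
  have hA : A.det ≠ 0 := by
    rw [Matrix.det_of_isLowerTriangular A fun i j hij => hlower i j hij]
    exact Finset.prod_ne_zero_iff.mpr fun i _ => hdiag i
  exact .of_comp (LinearMap.pi ψ) (Matrix.linearIndependent_rows_of_det_ne_zero hA)

namespace AlternatingMap

variable {R M N ι ι' : Type*} [CommSemiring R] [AddCommMonoid M] [Module R M]
  [AddCommMonoid N] [Module R N]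

def fixRight (f : M [⋀^ι ⊕ ι']→ₗ[R] N) (y : ι' → M) : M [⋀^ι]→ₗ[R] N where
  toFun x := f (Sum.elim x y)
  map_update_add' x i a b := by
    classical
    simp only [← Sum.update_elim_inl]
    convert f.map_update_add (Sum.elim x y) (Sum.inl i) a b
  map_update_smul' x i c a := by
    classical
    simp only [← Sum.update_elim_inl]
    convert f.map_update_smul (Sum.elim x y) (Sum.inl i) c a
  map_eq_zero_of_eq' x i j h hij :=
    f.map_eq_zero_of_eq _ (i := .inl i) (j := .inl j) h (by simpa using hij)

@[simp]
theorem fixRight_apply (f : M [⋀^ι ⊕ ι']→ₗ[R] N) (y : ι' → M) (x : ι → M) :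
    f.fixRight y x = f (Sum.elim x y) := rfl

end AlternatingMap

theorem Module.Basis.span_range_subtype_comp {R M ι : Type*} [Semiring R] [AddCommMonoid M]
    [Module R M] {U : Submodule R M} (b : Basis ι R U) :
    Submodule.span R (Set.range (U.subtype ∘ b)) = U := by
  rw [Set.range_comp, Submodule.span_image, b.span_eq, Submodule.map_subtype_top]

theorem Module.Basis.det_sumElim_ne_zero_iff {K W ι ι' : Type*} [Field K] [AddCommGroup W]
    [Module K W] [Fintype ι] [Fintype ι'] [DecidableEq ι] [DecidableEq ι']
    (e : Basis (ι ⊕ ι') K W) {x : ι → W} {y : ι' → W}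
    (hx : LinearIndependent K x) (hy : LinearIndependent K y) :
    e.det (Sum.elim x y) ≠ 0 ↔
      Disjoint (Submodule.span K (Set.range x)) (Submodule.span K (Set.range y)) := by
  have : FiniteDimensional K W := e.finiteDimensional_of_finite
  rw [← isUnit_iff_ne_zero, ← e.is_basis_iff_det]
  constructor
  · rintro ⟨hli, -⟩
    exact (linearIndependent_sum.mp hli).2.2
  · intro hdisj
    have hli : LinearIndependent K (Sum.elim x y) := hx.sum_type hy hdisj
    exact ⟨hli, hli.span_eq_top_of_card_eq_finrank' (finrank_eq_card_basis e).symm⟩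

theorem card_le_choose_of_skew {K W ι : Type*} [Field K] [AddCommGroup W] [Module K W]
    [FiniteDimensional K W] [Fintype ι] [LinearOrder ι] {a b : ℕ} (hW : finrank K W = a + b)
    (U V : ι → Submodule K W) (hU : ∀ i, finrank K (U i) = a) (hV : ∀ i, finrank K (V i) = b)
    (hself : ∀ i, Disjoint (U i) (V i)) (hskew : ∀ i j, i < j → ¬Disjoint (U i) (V j)) :
    Fintype.card ι ≤ (a + b).choose a := by
  let e : Basis (Fin a ⊕ Fin b) K W := (finBasisOfFinrankEq K W hW).reindex finSumFinEquiv.symm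
  let bU i := finBasisOfFinrankEq K (U i) (hU i)
  let bV i := finBasisOfFinrankEq K (V i) (hV i)
  have hdet i j : e.det (Sum.elim ((U i).subtype ∘ bU i) ((V j).subtype ∘ bV j)) ≠ 0 ↔
      Disjoint (U i) (V j) := by
    rw [e.det_sumElim_ne_zero_iff ((bU i).linearIndependent.map' _ (U i).ker_subtype)
      ((bV j).linearIndependent.map' _ (V j).ker_subtype), (bU i).span_range_subtype_comp,
      (bV j).span_range_subtype_comp]
  let u i := exteriorPower.ιMulti K a ((U i).subtype ∘ bU i)
  -- wedging with a basis of `V j`, then identifying `⋀^(a + b) W` with `K` through `e.det`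
  let ψ j : Dual K (⋀[K]^a W) :=
    exteriorPower.alternatingMapLinearEquiv (e.det.fixRight ((V j).subtype ∘ bV j))
  have hψ i j : ψ j (u i) = e.det (Sum.elim ((U i).subtype ∘ bU i) ((V j).subtype ∘ bV j)) := by
    simp [ψ, u, exteriorPower.alternatingMapLinearEquiv_apply_ιMulti]
  have hu : LinearIndependent K u := linearIndependent_of_triangular_pairing u ψ
    (fun i => by rw [hψ, hdet]; exact hself i)
    (fun i j hij => by rw [hψ]; exact not_not.mp fun h => hskew i j hij ((hdet i j).mp h))
  calc Fintype.card ι ≤ finrank K (⋀[K]^a W) := hu.fintype_card_le_finrank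
    _ = (a + b).choose a := by rw [exteriorPower.finrank_eq, hW]

theorem card_le_two_pow_of_skew {K W ι : Type*} [Field K] [AddCommGroup W] [Module K W]
    [FiniteDimensional K W] [Fintype ι] [LinearOrder ι] (U V : ι → Submodule K W)
    (hself : ∀ i, Disjoint (U i) (V i)) (hskew : ∀ i j, i < j → ¬Disjoint (U i) (V j)) :
    Fintype.card ι ≤ 2 ^ finrank K W := by
  classical
  set n := finrank K W
  choose V' hVV' hcompl using fun i => (hself i).symm.exists_isCompl
  have hdim i : finrank K (U i) + finrank K (V' i) = n :=
    Submodule.finrank_add_eq_of_isCompl (hcompl i).symm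
  have hfiber k (hk : k ≤ n) : Fintype.card {i // finrank K (U i) = k} ≤ n.choose k := by
    have := card_le_choose_of_skew (a := k) (b := n - k) (by omega)
      (fun i : {i // finrank K (U i) = k} => U i) (fun i => V' i) (fun i => i.2)
      (fun i => by have := hdim i; have := i.2; omega) (fun i => (hcompl i).symm.disjoint)
      (fun i j hij h => hskew i j hij (h.mono_right (hVV' j)))
    rwa [Nat.add_sub_cancel' hk] at this
  calc Fintype.card ι
      = ∑ k ∈ Finset.range (n + 1), (Finset.univ.filter fun i => finrank K (U i) = k).card :=
        Finset.card_eq_sum_card_fiberwise fun i _ =>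
          Finset.mem_range_succ_iff.mpr (Submodule.finrank_le (U i))
    _ ≤ ∑ k ∈ Finset.range (n + 1), n.choose k :=
        Finset.sum_le_sum fun k hk => by
          rw [← Fintype.card_subtype]
          exact hfiber k (Finset.mem_range_succ_iff.mp hk)
    _ = 2 ^ n := Nat.sum_range_choose n

theorem skew_subspaces_bound (F : Type*) [Field F] (W : Type*) [AddCommGroup W]
    [Module F W] [FiniteDimensional F W] (n m : ℕ)
    (hn : Module.finrank F W = n)
    (U V : Fin m → Submodule F W)
    (hself : ∀ i, U i ⊓ V i = ⊥)
    (hskew : ∀ i j, i < j → U i ⊓ V j ≠ ⊥) :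
    m ≤ 2 ^ n := by
  simpa [hn] using card_le_two_pow_of_skew U V (fun i => disjoint_iff.mpr (hself i))
    fun i j hij h => hskew i j hij (disjoint_iff.mp h)
end

section
/- Let {(A_i^{(1)},...,A_i^{(d)})}_{1≤i≤m} be a skew Bollobás system of d-partitions of subsets of [n]: each tuple consists of pairwise disjoint subsets of [n], and for all 1 ≤ i < j ≤ m there exist 1 ≤ p < q ≤ d with A_i^{(p)} ∩ A_j^{(q)} ≠ ∅. Then ∑_{i=1}^m 1 / M(|A_i^{(1)}|,...,|A_i^{(d)}|) ≤ C(n+d-1, d-1), where M(a_1,...,a_d) = (a_1+...+a_d)! / (a_1! ⋯ a_d!) is the multinomial coefficient. -/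
open Finset

namespace SkewBollobas

variable {n d : ℕ}

/-- offset of block p -/
def off (a : Fin d → ℕ) (p : Fin d) : ℕ := ∑ q ∈ Finset.univ.filter (fun q => q < p), a q

lemma off_add_self (a : Fin d → ℕ) (p : Fin d) :
    off a p + a p = ∑ q ∈ Finset.univ.filter (fun q => q ≤ p), a q := by
  have h : Finset.univ.filter (fun q => q ≤ p) =
      insert p (Finset.univ.filter (fun q : Fin d => q < p)) := by
    ext q; simp [le_iff_lt_or_eq, or_comm, eq_comm]
  rw [h, Finset.sum_insert (by simp), off, add_comm]

lemma off_add_le_sum (a : Fin d → ℕ) (p : Fin d) : off a p + a p ≤ ∑ q, a q := by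
  rw [off_add_self]
  exact Finset.sum_le_sum_of_subset (Finset.filter_subset _ _)

lemma off_add_lt (a : Fin d → ℕ) {p : Fin d} {r : ℕ} (hr : r < a p) :
    off a p + r < ∑ q, a q :=
  lt_of_lt_of_le (by omega) (off_add_le_sum a p)

lemma off_lex (a : Fin d → ℕ) {p q : Fin d} (hpq : p < q) {r : ℕ} (hr : r < a p) (r' : ℕ) :
    off a p + r < off a q + r' := by
  have h1 : off a p + a p ≤ off a q := by
    rw [off_add_self]
    refine Finset.sum_le_sum_of_subset ?_
    intro x hx
    simp only [Finset.mem_filter, Finset.mem_univ, true_and] at *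
    exact lt_of_le_of_lt hx hpq
  omega

/-- lex equivalence between a sigma of Fins and a Fin of the sum -/
noncomputable def sigmaFinEquiv (a : Fin d → ℕ) : (Σ p, Fin (a p)) ≃ Fin (∑ p, a p) := by
  refine Equiv.ofBijective (fun z => ⟨off a z.1 + z.2.1, off_add_lt a z.2.2⟩) ?_
  rw [Fintype.bijective_iff_injective_and_card]
  constructor
  · rintro ⟨p, r⟩ ⟨q, r'⟩ h
    simp only [Fin.mk.injEq] at h
    rcases lt_trichotomy p q with hlt | rfl | hlt
    · exact absurd h (Nat.ne_of_lt (off_lex a hlt r.2 r'))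
    · simpa using Fin.ext (Nat.add_left_cancel h)
    · exact absurd h.symm (Nat.ne_of_lt (off_lex a hlt r'.2 r))
  · simp

lemma sigmaFinEquiv_val (a : Fin d → ℕ) (z : Σ p, Fin (a p)) :
    (sigmaFinEquiv a z : ℕ) = off a z.1 + z.2.1 := rfl

end SkewBollobas

namespace SkewBollobas

variable {n d : ℕ}

/-- the "blocks in order" event -/
def occSet (B : Fin d → Finset (Fin n)) : Finset (Equiv.Perm (Fin n)) :=
  Finset.univ.filter (fun π => ∀ p q : Fin d, p < q → ∀ x ∈ B p, ∀ y ∈ B q, π x < π y)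

lemma mem_occSet {B : Fin d → Finset (Fin n)} {π : Equiv.Perm (Fin n)} :
    π ∈ occSet B ↔ ∀ p q : Fin d, p < q → ∀ x ∈ B p, ∀ y ∈ B q, π x < π y := by
  simp [occSet]

variable (B : Fin d → Finset (Fin n))

/-- union of all blocks -/
def bS : Finset (Fin n) := Finset.univ.biUnion B

variable (hd : ∀ p q : Fin d, p ≠ q → Disjoint (B p) (B q))

include hd

lemma card_bS : (bS B).card = ∑ p, (B p).card :=
  Finset.card_biUnion (fun p _ q _ hpq => hd p q hpq)

lemma sum_card_le : ∑ p, (B p).card ≤ n := by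
  rw [← card_bS B hd]
  simpa using Finset.card_le_card (Finset.subset_univ (bS B))

lemma card_bS_compl : (bS B)ᶜ.card = n - ∑ p, (B p).card := by
  rw [Finset.card_compl, card_bS B hd, Fintype.card_fin]

/-- glue function for the domain side -/
noncomputable def uFun : (Σ p, Fin ((B p).card)) ⊕ Fin (n - ∑ p, (B p).card) → Fin n :=
  fun z => match z with
  | Sum.inl ⟨p, r⟩ => (B p).orderEmbOfFin rfl r
  | Sum.inr t => (bS B)ᶜ.orderEmbOfFin (card_bS_compl B hd) t

lemma uFun_injective : Function.Injective (uFun B hd) := by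
  rintro (⟨p, r⟩ | t) (⟨p', r'⟩ | t') h <;> simp only [uFun] at h
  · rcases eq_or_ne p p' with rfl | hne
    · rw [(Finset.orderEmbOfFin (B p) rfl).injective h]
    · exact absurd (Finset.orderEmbOfFin_mem (B p) rfl r)
        (Finset.disjoint_left.mp (hd p p' hne) |>.mt (fun hh => hh (h ▸ Finset.orderEmbOfFin_mem (B p') rfl r')) |> fun _ => by
          have h1 := Finset.orderEmbOfFin_mem (B p) rfl r
          have h2 := Finset.orderEmbOfFin_mem (B p') rfl r'
          rw [h] at h1
          exact (Finset.disjoint_left.mp (hd p p' hne) h1 h2).elim)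
  · have h1 := Finset.orderEmbOfFin_mem (B p) rfl r
    have h2 := Finset.orderEmbOfFin_mem (bS B)ᶜ (card_bS_compl B hd) t'
    rw [h] at h1
    rw [Finset.mem_compl] at h2
    exact absurd (Finset.mem_biUnion.mpr ⟨p, Finset.mem_univ p, h1⟩) (h ▸ h2)
  · have h1 := Finset.orderEmbOfFin_mem (B p') rfl r'
    have h2 := Finset.orderEmbOfFin_mem (bS B)ᶜ (card_bS_compl B hd) t
    rw [← h] at h1
    rw [Finset.mem_compl] at h2
    exact absurd (Finset.mem_biUnion.mpr ⟨p', Finset.mem_univ p', h1⟩) h2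
  · rw [(Finset.orderEmbOfFin _ _).injective h]

lemma uFun_bijective : Function.Bijective (uFun B hd) := by
  rw [Fintype.bijective_iff_injective_and_card]
  refine ⟨uFun_injective B hd, ?_⟩
  simp only [Fintype.card_sum, Fintype.card_sigma, Fintype.card_fin]
  have := sum_card_le B hd
  omega

/-- glue equivalence for the domain side -/
noncomputable def uEquiv : ((Σ p, Fin ((B p).card)) ⊕ Fin (n - ∑ p, (B p).card)) ≃ Fin n :=
  Equiv.ofBijective (uFun B hd) (uFun_bijective B hd)

lemma uEquiv_symm_of_mem {p : Fin d} {x : Fin n} (hx : x ∈ B p) :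
    ∃ r, (uEquiv B hd).symm x = Sum.inl ⟨p, r⟩ := by
  obtain ⟨z, hz⟩ := (uFun_bijective B hd).2 x
  have hz' : (uEquiv B hd).symm x = z := by
    rw [Equiv.symm_apply_eq]; exact hz.symm
  match z with
  | Sum.inl ⟨p', r⟩ =>
    rcases eq_or_ne p' p with rfl | hne
    · exact ⟨r, hz'⟩
    · have h1 : uFun B hd (Sum.inl ⟨p', r⟩) ∈ B p' := Finset.orderEmbOfFin_mem _ rfl r
      rw [hz] at h1
      exact (Finset.disjoint_left.mp (hd p' p hne) h1 hx).elim
  | Sum.inr t =>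
    have h1 : uFun B hd (Sum.inr t) ∈ (bS B)ᶜ := Finset.orderEmbOfFin_mem _ _ t
    rw [hz, Finset.mem_compl] at h1
    exact (h1 (Finset.mem_biUnion.mpr ⟨p, Finset.mem_univ p, hx⟩)).elim

end SkewBollobas

namespace SkewBollobas

variable {n d : ℕ} (B : Fin d → Finset (Fin n))
variable (V : Finset (Fin n)) (hV : V.card = ∑ p, (B p).card)

include hV

lemma card_V_compl : Vᶜ.card = n - ∑ p, (B p).card := by
  rw [Finset.card_compl, hV, Fintype.card_fin]

/-- glue function for the codomain side -/
noncomputable def wFun : (Σ p, Fin ((B p).card)) ⊕ Fin (n - ∑ p, (B p).card) → Fin n :=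
  fun z => match z with
  | Sum.inl y => V.orderEmbOfFin hV (sigmaFinEquiv (fun p => (B p).card) y)
  | Sum.inr t => Vᶜ.orderEmbOfFin (card_V_compl B V hV) t

lemma wFun_inl_mem (y : Σ p, Fin ((B p).card)) : wFun B V hV (Sum.inl y) ∈ V :=
  Finset.orderEmbOfFin_mem _ _ _

lemma wFun_injective : Function.Injective (wFun B V hV) := by
  rintro (y | t) (y' | t') h <;> simp only [wFun] at h
  · rw [(sigmaFinEquiv _).injective ((V.orderEmbOfFin hV).injective h)]
  · have h1 := Finset.orderEmbOfFin_mem V hV (sigmaFinEquiv (fun p => (B p).card) y)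
    have h2 := Finset.orderEmbOfFin_mem Vᶜ (card_V_compl B V hV) t'
    rw [h] at h1
    exact ((Finset.mem_compl.mp h2) h1).elim
  · have h1 := Finset.orderEmbOfFin_mem V hV (sigmaFinEquiv (fun p => (B p).card) y')
    have h2 := Finset.orderEmbOfFin_mem Vᶜ (card_V_compl B V hV) t
    rw [← h] at h1
    rw [Finset.mem_compl] at h2
    exact (h2 h1).elim
  · rw [(Finset.orderEmbOfFin _ _).injective h]

lemma wFun_bijective : Function.Bijective (wFun B V hV) := by
  rw [Fintype.bijective_iff_injective_and_card]
  refine ⟨wFun_injective B V hV, ?_⟩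
  simp only [Fintype.card_sum, Fintype.card_sigma, Fintype.card_fin]
  have : ∑ p, (B p).card ≤ n := hV ▸ (by simpa using Finset.card_le_card (Finset.subset_univ V))
  omega

/-- glue equivalence for the codomain side -/
noncomputable def wEquiv : ((Σ p, Fin ((B p).card)) ⊕ Fin (n - ∑ p, (B p).card)) ≃ Fin n :=
  Equiv.ofBijective (wFun B V hV) (wFun_bijective B V hV)

variable (hd : ∀ p q : Fin d, p ≠ q → Disjoint (B p) (B q))
variable (ρ : Equiv.Perm (Fin (n - ∑ p, (B p).card))) (σ : ∀ p, Equiv.Perm (Fin ((B p).card)))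

/-- the permutation built from the data -/
noncomputable def buildPerm : Equiv.Perm (Fin n) :=
  (uEquiv B hd).symm.trans
    ((Equiv.sumCongr (Equiv.sigmaCongrRight σ) ρ).trans (wEquiv B V hV))

lemma buildPerm_apply_of_mem {p : Fin d} {x : Fin n} (hx : x ∈ B p) :
    ∃ r : Fin ((B p).card),
      buildPerm B V hV hd ρ σ x = V.orderEmbOfFin hV (sigmaFinEquiv _ ⟨p, σ p r⟩) := by
  obtain ⟨r, hr⟩ := uEquiv_symm_of_mem B hd hx
  refine ⟨r, ?_⟩
  simp only [buildPerm, Equiv.trans_apply, hr, Equiv.sumCongr_apply, Sum.map_inl,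
    Equiv.sigmaCongrRight_apply]
  rfl

lemma buildPerm_mem_occSet : buildPerm B V hV hd ρ σ ∈ occSet B := by
  rw [mem_occSet]
  intro p q hpq x hx y hy
  obtain ⟨r, hr⟩ := buildPerm_apply_of_mem B V hV hd ρ σ hx
  obtain ⟨r', hr'⟩ := buildPerm_apply_of_mem B V hV hd ρ σ hy
  rw [hr, hr']
  refine (V.orderEmbOfFin hV).strictMono ?_
  have := off_lex (fun p => (B p).card) hpq (σ p r).2 (σ q r' : ℕ)
  simpa [Fin.lt_def, sigmaFinEquiv_val] using this

lemma buildPerm_image : Finset.image (buildPerm B V hV hd ρ σ) (bS B) = V := by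
  have hsub : Finset.image (buildPerm B V hV hd ρ σ) (bS B) ⊆ V := by
    intro y hy
    obtain ⟨x, hx, rfl⟩ := Finset.mem_image.mp hy
    obtain ⟨p, _, hxp⟩ := Finset.mem_biUnion.mp hx
    obtain ⟨r, hr⟩ := buildPerm_apply_of_mem B V hV hd ρ σ hxp
    rw [hr]
    exact Finset.orderEmbOfFin_mem _ _ _
  refine Finset.eq_of_subset_of_card_le hsub ?_
  rw [Finset.card_image_of_injective _ (buildPerm B V hV hd ρ σ).injective,
    card_bS B hd, hV]

end SkewBollobas

namespace SkewBollobas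

variable {n d : ℕ} (B : Fin d → Finset (Fin n))

lemma occ_card_lower (hd : ∀ p q : Fin d, p ≠ q → Disjoint (B p) (B q)) :
    n.choose (∑ p, (B p).card) *
      ((n - ∑ p, (B p).card).factorial * ∏ p, ((B p).card).factorial) ≤ (occSet B).card := by
  classical
  set s := ∑ p, (B p).card with hs
  let X := {V // V ∈ Finset.powersetCard s (Finset.univ : Finset (Fin n))} ×
    (Equiv.Perm (Fin (n - s)) × ∀ p, Equiv.Perm (Fin ((B p).card)))
  have hmem : ∀ z : X, (z.1.1).card = s := fun z =>
    (Finset.mem_powersetCard_univ.mp z.1.2)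
  let ψ : X → {π // π ∈ occSet B} := fun z =>
    ⟨buildPerm B z.1.1 (hmem z) hd z.2.1 z.2.2,
      buildPerm_mem_occSet B z.1.1 (hmem z) hd z.2.1 z.2.2⟩
  have hinj : Function.Injective ψ := by
    rintro ⟨⟨V, hVmem⟩, ρ, σ⟩ ⟨⟨V', hVmem'⟩, ρ', σ'⟩ h
    simp only [ψ, Subtype.mk.injEq] at h
    have hVc : V.card = s := Finset.mem_powersetCard_univ.mp hVmem
    have hVc' : V'.card = s := Finset.mem_powersetCard_univ.mp hVmem'
    have hVeq : V = V' := by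
      rw [← buildPerm_image B V hVc hd ρ σ, ← buildPerm_image B V' hVc' hd ρ' σ', h]
    subst hVeq
    have hptw : ∀ z0, (Equiv.sumCongr (Equiv.sigmaCongrRight σ) ρ) z0 =
        (Equiv.sumCongr (Equiv.sigmaCongrRight σ') ρ') z0 := by
      intro z0
      have h2 := congrArg (fun π : Equiv.Perm (Fin n) => π ((uEquiv B hd) z0)) h
      simp only [buildPerm, Equiv.trans_apply, Equiv.symm_apply_apply] at h2
      exact (wEquiv B V hVc).injective h2
    have hρ : ρ = ρ' := by
      ext t
      have := hptw (Sum.inr t)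
      simpa using congrArg Fin.val (by simpa using this : ρ t = ρ' t)
    have hσ : σ = σ' := by
      funext p
      ext r
      have := hptw (Sum.inl ⟨p, r⟩)
      exact congrArg Fin.val (by simpa using this : (σ p) r = (σ' p) r)
    simp [hρ, hσ]
  have hle := Fintype.card_le_of_injective ψ hinj
  have hX : Fintype.card X =
      n.choose s * ((n - s).factorial * ∏ p, ((B p).card).factorial) := by
    simp [X, Fintype.card_prod, Fintype.card_pi, Fintype.card_perm, Fintype.card_coe,
      Finset.card_powersetCard, Fintype.card_fin]
  rwa [hX, Fintype.card_coe] at hle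

end SkewBollobas

namespace SkewBollobas

lemma strictMono_image_inj {α : Type*} [LinearOrder α] [DecidableEq α] {k : ℕ} {f g : Fin k → α}
    (hf : StrictMono f) (hg : StrictMono g)
    (h : Finset.image f Finset.univ = Finset.image g Finset.univ) : f = g := by
  have hc : (Finset.image f Finset.univ).card = k := by
    rw [Finset.card_image_of_injective _ hf.injective, Finset.card_univ, Fintype.card_fin]
  have h1 := Finset.orderEmbOfFin_unique hc
    (fun x => Finset.mem_image_of_mem f (Finset.mem_univ x)) hf
  have h2 := Finset.orderEmbOfFin_unique hc
    (fun x => h ▸ Finset.mem_image_of_mem g (Finset.mem_univ x)) hg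
  exact h1.trans h2.symm

variable {n d : ℕ}

lemma cut_count {m : ℕ} (hd2 : 2 ≤ d) (A : Fin m → Fin d → Finset (Fin n))
    (hskew : ∀ i j : Fin m, i < j → ∃ p q : Fin d, p < q ∧ (A i p ∩ A j q).Nonempty)
    (π : Equiv.Perm (Fin n)) :
    (Finset.univ.filter (fun i => π ∈ occSet (A i))).card ≤ (n + d - 1).choose (d - 1) := by
  set T : Fin m → ℕ → ℕ := fun i k =>
    Finset.sup (Finset.univ.filter (fun p : Fin d => (p : ℕ) ≤ k))
      (fun p => (A i p).sup (fun x => (π x : ℕ) + 1)) with hT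
  have hTn : ∀ i k, T i k ≤ n := by
    intro i k
    refine Finset.sup_le fun p _ => Finset.sup_le fun x _ => ?_
    exact (π x).2
  have hTmono : ∀ i, ∀ k k' : ℕ, k ≤ k' → T i k ≤ T i k' := by
    intro i k k' hkk
    refine Finset.sup_mono ?_
    intro p hp
    simp only [Finset.mem_filter, Finset.mem_univ, true_and] at hp ⊢
    omega
  have hT3 : ∀ i (p : Fin d) x k, x ∈ A i p → (p : ℕ) ≤ k → (π x : ℕ) + 1 ≤ T i k := by
    intro i p x k hx hpk
    have ha : (π x : ℕ) + 1 ≤ (A i p).sup (fun x => (π x : ℕ) + 1) := Finset.le_sup (f := fun y => (π y : ℕ) + 1) hx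
    have hb : (A i p).sup (fun x => (π x : ℕ) + 1) ≤ T i k := by
      rw [hT]
      exact Finset.le_sup (f := fun p => (A i p).sup (fun x => (π x : ℕ) + 1))
        (by simp [hpk])
    exact le_trans ha hb
  have hT4 : ∀ i (q : Fin d) x k, π ∈ occSet (A i) → x ∈ A i q → k < (q : ℕ) →
      T i k ≤ (π x : ℕ) := by
    intro i q x k hocc hx hkq
    refine Finset.sup_le fun p hp => Finset.sup_le fun y hy => ?_
    simp only [Finset.mem_filter, Finset.mem_univ, true_and] at hp
    have hpq : p < q := by rw [Fin.lt_def]; omega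
    have := mem_occSet.mp hocc p q hpq y hy x hx
    rw [Fin.lt_def] at this
    omega
  set f : Fin m → Fin (d - 1) → Fin (n + d - 1) := fun i k =>
    ⟨T i k + k, by have h1 := hTn i k; have h2 := k.2; omega⟩ with hf
  have hstrict : ∀ i, StrictMono (f i) := by
    intro i k k' hkk
    rw [Fin.lt_def] at hkk ⊢
    have := hTmono i k k' (le_of_lt hkk)
    simp only [f]
    omega
  set E : Fin m → Finset (Fin (n + d - 1)) := fun i => Finset.image (f i) Finset.univ with hE
  have hcard : ∀ i, (E i).card = d - 1 := by
    intro i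
    rw [hE, Finset.card_image_of_injective _ (hstrict i).injective, Finset.card_univ,
      Fintype.card_fin]
  have key : ∀ i j : Fin m, i < j → π ∈ occSet (A i) → π ∈ occSet (A j) →
      (∀ k : ℕ, k < d - 1 → T i k = T j k) → False := by
    intro i j hij hi hj hTeq
    obtain ⟨p, q, hpq, x, hx⟩ := hskew i j hij
    rw [Finset.mem_inter] at hx
    rw [Fin.lt_def] at hpq
    have hq2 := q.2
    have h1 : (π x : ℕ) + 1 ≤ T i (p : ℕ) := hT3 i p x (p : ℕ) hx.1 le_rfl
    have h2 : T i (p : ℕ) = T j (p : ℕ) := hTeq (p : ℕ) (by omega)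
    have h3 : T j (p : ℕ) ≤ T j ((q : ℕ) - 1) := hTmono j _ _ (by omega)
    have h4 : T j ((q : ℕ) - 1) ≤ (π x : ℕ) := hT4 j q x _ hj hx.2 (by omega)
    omega
  have hinj : Set.InjOn E (Finset.univ.filter (fun i => π ∈ occSet (A i))) := by
    intro i hi j hj hEq
    simp only [Finset.coe_filter, Set.mem_setOf_eq, Finset.mem_univ, true_and] at hi hj
    by_contra hne
    simp only [hE] at hEq
    have hfeq : f i = f j := strictMono_image_inj (hstrict i) (hstrict j) hEq
    have hTeq : ∀ k : ℕ, k < d - 1 → T i k = T j k := by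
      intro k hk
      have := congrArg (fun g => (g (⟨k, hk⟩ : Fin (d - 1)) : ℕ)) hfeq
      simp only [f] at this
      omega
    rcases lt_or_gt_of_ne hne with h | h
    · exact key i j h hi hj hTeq
    · exact key j i h hj hi (fun k hk => (hTeq k hk).symm)
  calc (Finset.univ.filter (fun i => π ∈ occSet (A i))).card
      ≤ (Finset.powersetCard (d - 1) (Finset.univ : Finset (Fin (n + d - 1)))).card := by
        refine Finset.card_le_card_of_injOn E (fun i _ => ?_) hinj
        rw [Finset.mem_coe, Finset.mem_powersetCard_univ]
        exact hcard i
    _ = (n + d - 1).choose (d - 1) := by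
        rw [Finset.card_powersetCard, Finset.card_univ, Fintype.card_fin]

end SkewBollobas

namespace SkewBollobas

lemma per_i {n d : ℕ} (B : Fin d → Finset (Fin n))
    (hd : ∀ p q : Fin d, p < q → Disjoint (B p) (B q)) :
    (1 : ℚ) / (Nat.multinomial Finset.univ (fun p => (B p).card)) ≤
      ((occSet B).card : ℚ) / (n.factorial : ℚ) := by
  have hd' : ∀ p q : Fin d, p ≠ q → Disjoint (B p) (B q) := fun p q hpq =>
    (lt_or_gt_of_ne hpq).elim (hd p q) (fun h => (hd q p h).symm)
  set s := ∑ p, (B p).card with hs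
  set M := Nat.multinomial Finset.univ (fun p => (B p).card) with hM
  have hsn : s ≤ n := sum_card_le B hd'
  have hnat : n.factorial ≤ (occSet B).card * M := by
    have h1 := occ_card_lower B hd'
    have hspec : (∏ p, ((B p).card).factorial) * M = s.factorial :=
      Nat.multinomial_spec _ _
    calc n.factorial = n.choose s * s.factorial * (n - s).factorial :=
          (Nat.choose_mul_factorial_mul_factorial hsn).symm
      _ = (n.choose s * ((n - s).factorial * ∏ p, ((B p).card).factorial)) * M := by
          rw [← hspec]; ring
      _ ≤ (occSet B).card * M := Nat.mul_le_mul_right _ h1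
  have hMpos : (0 : ℚ) < (M : ℚ) := by
    exact_mod_cast Nat.multinomial_pos _ _
  have hfpos : (0 : ℚ) < (n.factorial : ℚ) := by exact_mod_cast n.factorial_pos
  rw [div_le_div_iff₀ hMpos hfpos, one_mul]
  exact_mod_cast hnat

end SkewBollobas

theorem skew_bollobas_d_partitions (n d m : ℕ) (A : Fin m → Fin d → Finset (Fin n))
    (hdisj : ∀ i, ∀ p q : Fin d, p < q → Disjoint (A i p) (A i q))
    (hskew : ∀ i j : Fin m, i < j →
      ∃ p q : Fin d, p < q ∧ (A i p ∩ A j q).Nonempty) :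
    ∑ i, (1 : ℚ) / (Nat.multinomial Finset.univ (fun p => (A i p).card)) ≤
      (n + d - 1).choose (d - 1) := by
  open SkewBollobas in
  have hchoose_pos : (1 : ℚ) ≤ ((n + d - 1).choose (d - 1) : ℚ) := by
    have : 0 < (n + d - 1).choose (d - 1) := Nat.choose_pos (by omega)
    exact_mod_cast this
  rcases Nat.lt_or_ge m 2 with hm | hm
  · -- m = 0 or m = 1
    have hbound : ∀ i : Fin m, (1 : ℚ) /
        (Nat.multinomial Finset.univ (fun p => (A i p).card)) ≤ 1 := by
      intro i
      rw [div_le_one (by exact_mod_cast Nat.multinomial_pos _ _)]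
      exact_mod_cast Nat.succ_le_of_lt (Nat.multinomial_pos _ _)
    interval_cases m
    · simpa using le_trans zero_le_one hchoose_pos
    · calc ∑ i : Fin 1, (1 : ℚ) / (Nat.multinomial Finset.univ (fun p => (A i p).card))
          ≤ ∑ _i : Fin 1, (1 : ℚ) := Finset.sum_le_sum (fun i _ => hbound i)
        _ = 1 := by simp
        _ ≤ _ := hchoose_pos
  · -- main case
    obtain ⟨p0, q0, hpq0, -⟩ := hskew ⟨0, by omega⟩ ⟨1, by omega⟩ (by simp [Fin.lt_def])
    have hd2 : 2 ≤ d := by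
      have h1 := q0.2
      rw [Fin.lt_def] at hpq0
      omega
    have hsum_nat : ∑ i, (occSet (A i)).card ≤
        n.factorial * (n + d - 1).choose (d - 1) := by
      have hswap : ∑ i, (occSet (A i)).card =
          ∑ π : Equiv.Perm (Fin n),
            (Finset.univ.filter (fun i => π ∈ occSet (A i))).card := by
        simp only [Finset.card_filter]
        rw [Finset.sum_comm]
        congr 1
        funext i
        rw [← Finset.card_filter]
        congr 1
        exact (Finset.filter_univ_mem (occSet (A i))).symm
      rw [hswap]
      calc ∑ π : Equiv.Perm (Fin n),
            (Finset.univ.filter (fun i => π ∈ occSet (A i))).card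
          ≤ ∑ _π : Equiv.Perm (Fin n), (n + d - 1).choose (d - 1) :=
            Finset.sum_le_sum (fun π _ => cut_count hd2 A hskew π)
        _ = n.factorial * (n + d - 1).choose (d - 1) := by
            rw [Finset.sum_const, Finset.card_univ, Fintype.card_perm, Fintype.card_fin,
              smul_eq_mul]
    have hfpos : (0 : ℚ) < (n.factorial : ℚ) := by exact_mod_cast n.factorial_pos
    calc ∑ i, (1 : ℚ) / (Nat.multinomial Finset.univ (fun p => (A i p).card))
        ≤ ∑ i, ((occSet (A i)).card : ℚ) / (n.factorial : ℚ) :=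
          Finset.sum_le_sum (fun i _ => per_i (A i) (hdisj i))
      _ = (∑ i, ((occSet (A i)).card : ℚ)) / (n.factorial : ℚ) := by
          rw [Finset.sum_div]
      _ ≤ ((n + d - 1).choose (d - 1) : ℚ) := by
          rw [div_le_iff₀ hfpos]
          push_cast
          rw [mul_comm]
          exact_mod_cast hsum_nat
end
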